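/- arXiv:1211.0386 — 10 statements merged into one kernel-verified Lean document; each statement's English description precedes it below -/
import Mathlib

section
/- Let L : M_n(ℂ) → M_m(ℂ) be a linear map and 1 ≤ k ≤ n. Then L is k-positive (i.e., the map I_k ⊗ L on M_k(M_n(ℂ)) maps positive semidefinite matrices to positive semidefinite matrices) if and only if for every vector x = ∑_{p=1}^k y_p ⊗ z_p with y_p ∈ ℂ^n and z_p ∈ ℂ^m, one has ⟨x| C(L) |x⟩ ≥ 0, where C(L) = (L(E_{ij}))_{1≤i,j≤n} is the Choi matrix of L. -/
/-!
Write `C` for the Choi matrix of `L` and, for `y : k → n → ℂ`, let `V_y = yᵀ ⊗ 1` be the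
operator `z ↦ ∑ᵢ yᵢ ⊗ zᵢ`. Expanding `L` in matrix units gives
`(I_k ⊗ L)(ȳ yᵀ) = V_yᴴ C V_y`, so the quadratic form of `(I_k ⊗ L)(ȳ yᵀ)` at `z` is that
of `C` at the Schmidt-rank-`k` vector `∑ᵢ yᵢ ⊗ zᵢ`. Since every positive semidefinite matrix
on `ℂᵏ ⊗ ℂⁿ` is a sum of rank-one ones `ȳ yᵀ` and `I_k ⊗ L` is linear, both directions
follow; over `ℂ` a matrix with nonnegative quadratic form is automatically Hermitian.
-/

open Matrix ComplexOrder Kronecker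

namespace Matrix

variable {n : Type*} [Fintype n]

theorem isHermitian_of_forall_dotProduct_mulVec_nonneg [DecidableEq n] {M : Matrix n n ℂ}
    (h : ∀ x : n → ℂ, 0 ≤ star x ⬝ᵥ M *ᵥ x) : M.IsHermitian := by
  rw [← isSymmetric_toEuclideanLin_iff, LinearMap.isSymmetric_iff_inner_map_self_real,
    (WithLp.equiv 2 (n → ℂ)).symm.surjective.forall]
  intro x
  change starRingEnd ℂ (x ⬝ᵥ star (M *ᵥ x)) = x ⬝ᵥ star (M *ᵥ x)
  rw [dotProduct_comm, star_dotProduct]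
  have hx := (IsSelfAdjoint.of_nonneg (h x)).star_eq
  rw [hx, starRingEnd_apply, hx]

theorem posSemidef_iff_forall_dotProduct_mulVec_nonneg {M : Matrix n n ℂ} :
    M.PosSemidef ↔ ∀ x : n → ℂ, 0 ≤ star x ⬝ᵥ M *ᵥ x := by
  classical
  exact ⟨PosSemidef.dotProduct_mulVec_nonneg, fun h =>
    .of_dotProduct_mulVec_nonneg (isHermitian_of_forall_dotProduct_mulVec_nonneg h) h⟩

end Matrix

section ChoiMatrix

variable {R : Type*} [CommRing R] {k n m : Type*}

def choiMatrix [DecidableEq n] (L : Matrix n n R →ₗ[R] Matrix m m R) :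
    Matrix (n × m) (n × m) R :=
  of fun p q => L (single p.1 q.1 1) p.2 q.2

lemma apply_eq_sum_choiMatrix [Fintype n] [DecidableEq n] (L : Matrix n n R →ₗ[R] Matrix m m R)
    (X : Matrix n n R) (a b : m) : L X a b = ∑ x, ∑ y, X x y * choiMatrix L (x, a) (y, b) := by
  have single_eq (x y : n) : single x y (X x y) = X x y • single x y (1 : R) := by
    rw [smul_single, smul_eq_mul, mul_one]
  conv_lhs => rw [matrix_eq_sum_single X]
  simp only [map_sum, Matrix.sum_apply, single_eq, map_smul, Matrix.smul_apply, smul_eq_mul,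
    choiMatrix, of_apply]

variable (k) in
/-- The map `I_k ⊗ L`, acting blockwise on `M_k(M_n(R)) ≅ Matrix (k × n) (k × n) R`. -/
def blockMap (L : Matrix n n R →ₗ[R] Matrix m m R) :
    Matrix (k × n) (k × n) R →ₗ[R] Matrix (k × m) (k × m) R :=
  (compLinearEquiv k k m m R R).toLinearMap ∘ₗ L.mapMatrix ∘ₗ
    (compLinearEquiv k k n n R R).symm.toLinearMap

lemma blockMap_apply (L : Matrix n n R →ₗ[R] Matrix m m R) (A : Matrix (k × n) (k × n) R)
    (p q : k × m) : blockMap k L A p q = L (of fun x y => A (p.1, x) (q.1, y)) p.2 q.2 :=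
  rfl

variable (k) in
def IsKPositive [PartialOrder R] [StarRing R] (L : Matrix n n R →ₗ[R] Matrix m m R) : Prop :=
  ∀ A : Matrix (k × n) (k × n) R, A.PosSemidef → (blockMap k L A).PosSemidef

def schmidtVector [Fintype k] (y : k → n → R) (z : k → m → R) : n × m → R :=
  fun p => ∑ i, y i p.1 * z i p.2

variable (m) in
def schmidtOperator [DecidableEq m] (y : k → n → R) : Matrix (n × m) (k × m) R :=
  (of fun x i => y i x) ⊗ₖ (1 : Matrix m m R)

lemma schmidtOperator_mulVec [Fintype k] [Fintype m] [DecidableEq m] (y : k → n → R)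
    (z : k → m → R) :
    schmidtOperator m y *ᵥ Function.uncurry z = schmidtVector y z := by
  ext ⟨x, a⟩
  simp [schmidtOperator, schmidtVector, mulVec, dotProduct, Fintype.sum_prod_type, one_apply]

variable [StarRing R]

lemma blockMap_vecMulVec [Fintype n] [Fintype m] [DecidableEq n] [DecidableEq m]
    (L : Matrix n n R →ₗ[R] Matrix m m R) (y : k → n → R) :
    blockMap k L (vecMulVec (star (Function.uncurry y)) (Function.uncurry y)) =
      (schmidtOperator m y)ᴴ * choiMatrix L * schmidtOperator m y := by
  ext ⟨i, a⟩ ⟨j, b⟩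
  simp only [blockMap_apply, apply_eq_sum_choiMatrix, of_apply, vecMulVec_apply, Pi.star_apply,
    Function.uncurry_apply_pair, schmidtOperator, mul_apply, conjTranspose_apply,
    kroneckerMap_apply, one_apply, mul_ite, mul_one, mul_zero, apply_ite star, star_zero, ite_mul,
    zero_mul, Fintype.sum_prod_type, Finset.sum_ite_eq', Finset.mem_univ, if_true,
    Finset.sum_mul]
  rw [Finset.sum_comm]
  exact Finset.sum_congr rfl fun _ _ => Finset.sum_congr rfl fun _ _ => by ring

lemma star_dotProduct_blockMap_vecMulVec_mulVec [Fintype k] [Fintype n] [Fintype m]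
    [DecidableEq n] (L : Matrix n n R →ₗ[R] Matrix m m R) (y : k → n → R)
    (z : k → m → R) :
    star (Function.uncurry z) ⬝ᵥ
        blockMap k L (vecMulVec (star (Function.uncurry y)) (Function.uncurry y)) *ᵥ
          Function.uncurry z =
      star (schmidtVector y z) ⬝ᵥ choiMatrix L *ᵥ schmidtVector y z := by
  classical
  rw [blockMap_vecMulVec, ← schmidtOperator_mulVec]
  simp only [star_mulVec, dotProduct_mulVec, vecMul_vecMul]

end ChoiMatrix

theorem isKPositive_iff_forall_schmidtVector {k n m : Type*} [Fintype k] [Fintype n]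
    [Fintype m] [DecidableEq n] (L : Matrix n n ℂ →ₗ[ℂ] Matrix m m ℂ) :
    IsKPositive k L ↔
      ∀ (y : k → n → ℂ) (z : k → m → ℂ),
        0 ≤ star (schmidtVector y z) ⬝ᵥ choiMatrix L *ᵥ schmidtVector y z := by
  refine ⟨fun h y z => ?_, fun h A hA => ?_⟩
  · rw [← star_dotProduct_blockMap_vecMulVec_mulVec]
    exact (h _ (posSemidef_vecMulVec_star_self _)).dotProduct_mulVec_nonneg _
  · obtain ⟨r, v, rfl⟩ := posSemidef_iff_eq_sum_vecMulVec.mp hA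
    refine posSemidef_iff_forall_dotProduct_mulVec_nonneg.mpr fun x => ?_
    simp only [map_sum, sum_mulVec, dotProduct_sum]
    refine Finset.sum_nonneg fun i _ => ?_
    have hi := star_dotProduct_blockMap_vecMulVec_mulVec L
      (Function.curry (star (v i))) (Function.curry x)
    simp only [Function.uncurry_curry, star_star] at hi
    exact hi ▸ h _ _

theorem stmt_0_general {n m k : ℕ}
    (L : Matrix (Fin n) (Fin n) ℂ →ₗ[ℂ] Matrix (Fin m) (Fin m) ℂ) :
    (∀ A : Matrix (Fin k × Fin n) (Fin k × Fin n) ℂ, A.PosSemidef →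
      (Matrix.of fun p q : Fin k × Fin m =>
        L (Matrix.of fun x y => A (p.1, x) (q.1, y)) p.2 q.2).PosSemidef)
    ↔ (∀ (y : Fin k → Fin n → ℂ) (z : Fin k → Fin m → ℂ),
        0 ≤ star (fun p : Fin n × Fin m => ∑ i, y i p.1 * z i p.2) ⬝ᵥ
          (Matrix.of fun p q : Fin n × Fin m =>
              L (Matrix.single p.1 q.1 1) p.2 q.2).mulVec
            (fun p : Fin n × Fin m => ∑ i, y i p.1 * z i p.2)) :=
  isKPositive_iff_forall_schmidtVector L

open Matrix ComplexOrder in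
/-- `L` is `k`-positive iff `⟨x|C(L)|x⟩ ≥ 0` for all vectors `x`
of Schmidt rank at most `k`. -/
theorem stmt_0 {n m k : ℕ} (hk1 : 1 ≤ k) (hkn : k ≤ n)
    (L : Matrix (Fin n) (Fin n) ℂ →ₗ[ℂ] Matrix (Fin m) (Fin m) ℂ) :
    (∀ A : Matrix (Fin k × Fin n) (Fin k × Fin n) ℂ, A.PosSemidef →
      (Matrix.of fun p q : Fin k × Fin m =>
        L (Matrix.of fun x y => A (p.1, x) (q.1, y)) p.2 q.2).PosSemidef)
    ↔ (∀ (y : Fin k → Fin n → ℂ) (z : Fin k → Fin m → ℂ),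
        0 ≤ star (fun p : Fin n × Fin m => ∑ i, y i p.1 * z i p.2) ⬝ᵥ
          (Matrix.of fun p q : Fin n × Fin m =>
              L (Matrix.single p.1 q.1 1) p.2 q.2).mulVec
            (fun p : Fin n × Fin m => ∑ i, y i p.1 * z i p.2)) :=
  stmt_0_general L
end

section
/- If a linear map L : M_n(ℂ) → M_m(ℂ) maps Hermitian matrices to Hermitian matrices and has the form L(X) = ∑_{j=1}^k A_j X B_j† for matrices A_j, B_j ∈ M_{m,n}(ℂ), then L can be written in the form L(X) = ∑_{j=1}^p C_j X C_j† − ∑_{j=1}^q D_j X D_j† for some matrices C_j, D_j ∈ M_{m,n}(ℂ). -/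
open Matrix in
/-- a Hermiticity-preserving elementary operator
`X ↦ ∑ A_j X B_j†` can be written as `X ↦ ∑ C_j X C_j† − ∑ D_j X D_j†`. -/
theorem stmt_3 {n m k : ℕ}
    (L : Matrix (Fin n) (Fin n) ℂ →ₗ[ℂ] Matrix (Fin m) (Fin m) ℂ)
    (A B : Fin k → Matrix (Fin m) (Fin n) ℂ)
    (hL : ∀ X, L X = ∑ j, A j * X * (B j)ᴴ)
    (hHerm : ∀ X : Matrix (Fin n) (Fin n) ℂ, X.IsHermitian → (L X).IsHermitian) :
    ∃ (p q : ℕ) (C : Fin p → Matrix (Fin m) (Fin n) ℂ)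
      (D : Fin q → Matrix (Fin m) (Fin n) ℂ),
      ∀ X, L X = (∑ j, C j * X * (C j)ᴴ) - ∑ j, D j * X * (D j)ᴴ := by
  have herm : ∀ H : Matrix (Fin n) (Fin n) ℂ, H.IsHermitian →
      ∑ j, B j * H * (A j)ᴴ = ∑ j, A j * H * (B j)ᴴ := by
    intro H hH
    have h1 : (∑ j, A j * H * (B j)ᴴ)ᴴ = ∑ j, A j * H * (B j)ᴴ := by
      have := hHerm H hH
      rwa [hL, Matrix.IsHermitian] at this
    calc ∑ j, B j * H * (A j)ᴴ = (∑ j, A j * H * (B j)ᴴ)ᴴ := by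
          simp [Matrix.conjTranspose_sum, Matrix.conjTranspose_mul, hH.eq, Matrix.mul_assoc]
      _ = _ := h1
  have key : ∀ X : Matrix (Fin n) (Fin n) ℂ,
      ∑ j, B j * X * (A j)ᴴ = ∑ j, A j * X * (B j)ᴴ := by
    intro X
    have hH1 : (X + Xᴴ).IsHermitian := by
      simp [Matrix.IsHermitian, add_comm]
    have hH2 : (Complex.I • (X - Xᴴ)).IsHermitian := by
      simp [Matrix.IsHermitian, Matrix.conjTranspose_smul, smul_sub, Complex.conj_I]
      abel
    have e1 := herm _ hH1
    have e2 := herm _ hH2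
    simp only [Matrix.mul_add, Matrix.add_mul, Matrix.mul_sub, Matrix.sub_mul,
      Matrix.mul_smul, Matrix.smul_mul, Finset.sum_add_distrib, Finset.sum_sub_distrib,
      ← Finset.smul_sum] at e1 e2
    have e2' : (∑ j, B j * X * (A j)ᴴ) - (∑ j, B j * Xᴴ * (A j)ᴴ)
        = (∑ j, A j * X * (B j)ᴴ) - (∑ j, A j * Xᴴ * (B j)ᴴ) :=
      smul_right_injective _ Complex.I_ne_zero e2
    have h2 : (2 : ℂ) • (∑ j, B j * X * (A j)ᴴ) = (2 : ℂ) • (∑ j, A j * X * (B j)ᴴ) := by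
      rw [two_smul, two_smul]
      calc (∑ j, B j * X * (A j)ᴴ) + (∑ j, B j * X * (A j)ᴴ)
          = ((∑ j, B j * X * (A j)ᴴ) + (∑ j, B j * Xᴴ * (A j)ᴴ))
            + ((∑ j, B j * X * (A j)ᴴ) - (∑ j, B j * Xᴴ * (A j)ᴴ)) := by abel
        _ = ((∑ j, A j * X * (B j)ᴴ) + (∑ j, A j * Xᴴ * (B j)ᴴ))
            + ((∑ j, A j * X * (B j)ᴴ) - (∑ j, A j * Xᴴ * (B j)ᴴ)) := by rw [e1, e2']
        _ = _ := by abel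
    exact smul_right_injective _ two_ne_zero h2
  set c : ℂ := Complex.ofReal ((Real.sqrt 2)⁻¹) with hc
  have hcc : c * star c = (2 : ℂ)⁻¹ := by
    rw [hc, Complex.star_def, Complex.conj_ofReal, ← Complex.ofReal_mul]
    rw [← mul_inv, Real.mul_self_sqrt (by norm_num)]
    norm_num
  refine ⟨k, k + k, fun j => c • (A j + B j),
    Fin.append (fun j => c • A j) (fun j => c • B j), fun X => ?_⟩
  rw [hL]
  have expand : ∀ (M : Matrix (Fin m) (Fin n) ℂ),
      (c • M) * X * (c • M)ᴴ = (2 : ℂ)⁻¹ • (M * X * Mᴴ) := by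
    intro M
    rw [Matrix.conjTranspose_smul, Matrix.smul_mul, Matrix.smul_mul, Matrix.mul_smul,
      smul_smul, hcc]
  rw [Fin.sum_univ_add]
  simp only [Fin.append_left, Fin.append_right, expand]
  simp only [← Finset.smul_sum]
  have lhs2 : ∑ j, (A j + B j) * X * (A j + B j)ᴴ
      = (∑ j, A j * X * (A j)ᴴ) + (∑ j, A j * X * (B j)ᴴ)
        + (∑ j, B j * X * (A j)ᴴ) + (∑ j, B j * X * (B j)ᴴ) := by
    simp only [Matrix.conjTranspose_add, Matrix.add_mul, Matrix.mul_add,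
      Finset.sum_add_distrib]
    abel
  rw [lhs2, key X]
  rw [smul_add, smul_add, smul_add]
  have htwo : ∀ (M : Matrix (Fin m) (Fin m) ℂ), (2:ℂ)⁻¹ • M + (2:ℂ)⁻¹ • M = M := by
    intro M; rw [← add_smul]; norm_num

  rw [eq_sub_iff_add_eq]
  calc ∑ j, A j * X * (B j)ᴴ
      + ((2:ℂ)⁻¹ • ∑ x, A x * X * (A x)ᴴ + (2:ℂ)⁻¹ • ∑ x, B x * X * (B x)ᴴ)
      = ((2:ℂ)⁻¹ • ∑ j, A j * X * (B j)ᴴ + (2:ℂ)⁻¹ • ∑ j, A j * X * (B j)ᴴ)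
        + ((2:ℂ)⁻¹ • ∑ x, A x * X * (A x)ᴴ + (2:ℂ)⁻¹ • ∑ x, B x * X * (B x)ᴴ) := by
        rw [htwo]
    _ = _ := by abel
end

section
/- Let L : M_n(ℂ) → M_m(ℂ) have the form L(X) = ∑_{r=1}^p C_r X C_r† − ∑_{s=1}^q D_s X D_s† with C_r, D_s ∈ M_{m,n}(ℂ). If L is k-positive, then the k-numerical range of the Hermitian matrix ∑_{r=1}^p C_r† C_r − ∑_{s=1}^q D_s† D_s is contained in [0, ∞); equivalently, the sum of the k smallest eigenvalues of this matrix is nonnegative. -/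
/-! The rank-one matrix `A = v v†`, with `v = (f₁, …, f_k) ∈ ℂ^k ⊗ ℂ^n`, is positive semidefinite,
so `(id_k ⊗ L)(A)` is positive semidefinite and has nonnegative trace. That trace is
`∑ⱼ tr L(fⱼ fⱼ†)`, and cycling the trace turns `tr (C fⱼ fⱼ† C†)` into `fⱼ† C† C fⱼ`. -/

open Matrix ComplexOrder

section Trace

variable {R ι κ n m : Type*} [CommRing R] [StarRing R]
  [Fintype ι] [Fintype κ] [Fintype n] [Fintype m]

theorem trace_sum_conj_sub_sum_conj (C : ι → Matrix m n R) (D : κ → Matrix m n R)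
    (X : Matrix n n R) :
    trace ((∑ r, C r * X * (C r)ᴴ) - ∑ s, D s * X * (D s)ᴴ) =
      trace (((∑ r, (C r)ᴴ * C r) - ∑ s, (D s)ᴴ * D s) * X) := by
  simp only [trace_sub, trace_sum, Matrix.sub_mul, Finset.sum_mul]
  congr 1 <;> exact Finset.sum_congr rfl fun r _ => trace_mul_cycle _ _ _

theorem star_dotProduct_mulVec_eq_trace (M : Matrix n n R) (g : n → R) :
    star g ⬝ᵥ M *ᵥ g = trace (M * vecMulVec g (star g)) := by
  rw [mul_vecMulVec, trace_vecMulVec, dotProduct_comm]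

end Trace

/-- The ampliation `id_κ ⊗ Φ`, acting blockwise on `κ × κ` block matrices with `n × n` blocks. -/
def ampliation {R κ n m : Type*} (Φ : Matrix n n R → Matrix m m R)
    (A : Matrix (κ × n) (κ × n) R) : Matrix (κ × m) (κ × m) R :=
  of fun u v => Φ (of fun x y => A (u.1, x) (v.1, y)) u.2 v.2

theorem trace_ampliation {R κ n m : Type*} [AddCommMonoid R] [Fintype κ] [Fintype m]
    (Φ : Matrix n n R → Matrix m m R) (A : Matrix (κ × n) (κ × n) R) :
    trace (ampliation Φ A) = ∑ j, trace (Φ (of fun x y => A (j, x) (j, y))) :=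
  Fintype.sum_prod_type _

theorem stmt_4_general {n m k p q : ℕ}
    (C : Fin p → Matrix (Fin m) (Fin n) ℂ)
    (D : Fin q → Matrix (Fin m) (Fin n) ℂ)
    (L : Matrix (Fin n) (Fin n) ℂ → Matrix (Fin m) (Fin m) ℂ)
    (hL : ∀ X, L X = (∑ r, C r * X * (C r)ᴴ) - ∑ s, D s * X * (D s)ᴴ)
    (hpos : ∀ A : Matrix (Fin k × Fin n) (Fin k × Fin n) ℂ, A.PosSemidef →
      (Matrix.of fun u v : Fin k × Fin m =>
        L (Matrix.of fun x y => A (u.1, x) (v.1, y)) u.2 v.2).PosSemidef) :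
    ∀ f : Fin k → Fin n → ℂ,
      (∀ i j, star (f i) ⬝ᵥ f j = if i = j then 1 else 0) →
      0 ≤ ∑ j, star (f j) ⬝ᵥ
        ((∑ r, (C r)ᴴ * C r) - ∑ s, (D s)ᴴ * D s).mulVec (f j) := by
  intro f _
  let v : Fin k × Fin n → ℂ := fun u => f u.1 u.2
  have hamp : (ampliation L (vecMulVec v (star v))).PosSemidef :=
    hpos _ (posSemidef_vecMulVec_self_star v)
  have htrace : trace (ampliation L (vecMulVec v (star v))) =
      ∑ j, star (f j) ⬝ᵥ ((∑ r, (C r)ᴴ * C r) - ∑ s, (D s)ᴴ * D s).mulVec (f j) := by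
    rw [trace_ampliation]
    refine Finset.sum_congr rfl fun j _ => ?_
    rw [star_dotProduct_mulVec_eq_trace, ← trace_sum_conj_sub_sum_conj, ← hL]
    rfl
  exact htrace ▸ hamp.trace_nonneg

open Matrix ComplexOrder in
/-- if `L(X) = ∑ C_r X C_r† − ∑ D_s X D_s†` is `k`-positive, then
`W_k(∑ C_r† C_r − ∑ D_s† D_s) ⊆ [0, ∞)`. -/
theorem stmt_4 {n m k p q : ℕ} (hk1 : 1 ≤ k) (hkn : k ≤ n)
    (C : Fin p → Matrix (Fin m) (Fin n) ℂ)
    (D : Fin q → Matrix (Fin m) (Fin n) ℂ)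
    (L : Matrix (Fin n) (Fin n) ℂ → Matrix (Fin m) (Fin m) ℂ)
    (hL : ∀ X, L X = (∑ r, C r * X * (C r)ᴴ) - ∑ s, D s * X * (D s)ᴴ)
    (hpos : ∀ A : Matrix (Fin k × Fin n) (Fin k × Fin n) ℂ, A.PosSemidef →
      (Matrix.of fun u v : Fin k × Fin m =>
        L (Matrix.of fun x y => A (u.1, x) (v.1, y)) u.2 v.2).PosSemidef) :
    ∀ f : Fin k → Fin n → ℂ,
      (∀ i j, star (f i) ⬝ᵥ f j = if i = j then 1 else 0) →
      0 ≤ ∑ j, star (f j) ⬝ᵥ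
        ((∑ r, (C r)ᴴ * C r) - ∑ s, (D s)ᴴ * D s).mulVec (f j) :=
  stmt_4_general C D L hL hpos
end

section
/- Let F_1, …, F_{mn} ∈ M_{m,n}(ℂ). Then {F_1,…,F_{mn}} is orthonormal with respect to the inner product (X,Y) = tr(XY†) if and only if for every orthonormal basis {x_1,…,x_n} of ℂ^n, the matrices P_r = ∑_{i,j=1}^n |x_i⟩⟨x_j| ⊗ F_r |x_i⟩⟨x_j| F_r† (1 ≤ r ≤ mn) form a family of mutually orthogonal rank-one orthogonal projections in M_{mn}(ℂ). -/
/-!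
Writing `v_r = ∑ i, x_i ⊗ F_r x_i`, the matrix `P_r` is the rank-one matrix `|v_r⟩⟨v_r|`, and
`⟨v_r, v_s⟩ = tr (F_s F_r†)` because the `x_i` form an orthonormal basis. Matrices `|v_r⟩⟨v_r|` are
mutually orthogonal rank-one projections exactly when the `v_r` are orthonormal, so both sides of
the equivalence say that the Gram matrix of the `F_r` is the identity; for the converse it suffices
to take the standard basis.
-/

open Matrix Kronecker

namespace Matrix

section RankOne

variable {K m n ι : Type*} [Field K] [Fintype n]

theorem rank_eq_zero_iff {A : Matrix m n K} : A.rank = 0 ↔ A = 0 := by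
  classical
  rw [rank, Submodule.finrank_eq_zero, LinearMap.range_eq_bot, ← toLin'_apply',
    map_eq_zero_iff _ toLin'.injective]

theorem rank_vecMulVec_of_ne_zero {v : m → K} {w : n → K} (hv : v ≠ 0) (hw : w ≠ 0) :
    (vecMulVec v w).rank = 1 := by
  refine le_antisymm (rank_vecMulVec_le v w) (Nat.one_le_iff_ne_zero.2 fun h => ?_)
  obtain ⟨i, hi⟩ := Function.ne_iff.1 hv
  obtain ⟨j, hj⟩ := Function.ne_iff.1 hw
  exact mul_ne_zero hi hj congr($(rank_eq_zero_iff.1 h) i j)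

variable [StarRing K]

omit [Fintype n] in
theorem isHermitian_vecMulVec_star (v : n → K) : (vecMulVec v (star v)).IsHermitian := by
  rw [IsHermitian, conjTranspose_vecMulVec, star_star]

theorem vecMulVec_star_mul_vecMulVec_star (v w : n → K) :
    vecMulVec v (star v) * vecMulVec w (star w) = (star v ⬝ᵥ w) • vecMulVec v (star w) := by
  rw [vecMulVec_mul_vecMulVec, vecMulVec_smul]

theorem vecMulVec_star_mul_self_eq_self_iff {v : n → K} (hv : v ≠ 0) :
    vecMulVec v (star v) * vecMulVec v (star v) = vecMulVec v (star v) ↔ star v ⬝ᵥ v = 1 := by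
  rw [vecMulVec_star_mul_vecMulVec_star]
  conv_lhs => rhs; rw [← one_smul K (vecMulVec v (star v))]
  exact (smul_left_injective K (vecMulVec_ne_zero hv (star_ne_zero.2 hv))).eq_iff

theorem vecMulVec_star_mul_vecMulVec_star_eq_zero_iff {v w : n → K} (hv : v ≠ 0) (hw : w ≠ 0) :
    vecMulVec v (star v) * vecMulVec w (star w) = 0 ↔ star v ⬝ᵥ w = 0 := by
  simp [vecMulVec_star_mul_vecMulVec_star, hv, hw]

theorem vecMulVec_star_orthogonal_projections_iff [DecidableEq ι] (v : ι → n → K) :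
    ((∀ r, (vecMulVec (v r) (star (v r))).IsHermitian) ∧
      (∀ r, vecMulVec (v r) (star (v r)) * vecMulVec (v r) (star (v r)) =
        vecMulVec (v r) (star (v r))) ∧
      (∀ r, (vecMulVec (v r) (star (v r))).rank = 1) ∧
      (∀ r s, r ≠ s → vecMulVec (v r) (star (v r)) * vecMulVec (v s) (star (v s)) = 0)) ↔
    ∀ r s, star (v r) ⬝ᵥ v s = if r = s then 1 else 0 := by
  constructor
  · rintro ⟨-, hidem, hrank, horth⟩ r s
    have hv : ∀ r, v r ≠ 0 := fun r h => by simpa [h] using hrank r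
    split_ifs with hrs
    · exact hrs ▸ (vecMulVec_star_mul_self_eq_self_iff (hv r)).1 (hidem r)
    · exact (vecMulVec_star_mul_vecMulVec_star_eq_zero_iff (hv r) (hv s)).1 (horth r s hrs)
  · intro h
    have hv : ∀ r, v r ≠ 0 := fun r h0 => by simpa [h0] using h r r
    refine ⟨fun r => isHermitian_vecMulVec_star _, fun r => ?_, fun r => ?_, fun r s hrs => ?_⟩
    · exact (vecMulVec_star_mul_self_eq_self_iff (hv r)).2 (by simpa using h r r)
    · exact rank_vecMulVec_of_ne_zero (hv r) (star_ne_zero.2 (hv r))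
    · exact (vecMulVec_star_mul_vecMulVec_star_eq_zero_iff (hv r) (hv s)).2
        (by simpa [hrs] using h r s)

end RankOne

section Entangled

variable {R ι κ μ : Type*} [CommRing R] [StarRing R] [Fintype ι] [Fintype κ]

/-- The vector `∑ i, x i ⊗ F x i`, indexed like `Matrix.kronecker`. -/
def entangledVec (x : ι → κ → R) (F : Matrix μ κ R) : κ × μ → R :=
  fun p => ∑ i, x i p.1 * (F *ᵥ x i) p.2

theorem sum_vecMulVec_kronecker_vecMulVec (x : ι → κ → R) (F : Matrix μ κ R) :
    ∑ i, ∑ j, vecMulVec (x i) (star (x j)) ⊗ₖ vecMulVec (F *ᵥ x i) (star (F *ᵥ x j)) =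
      vecMulVec (entangledVec x F) (star (entangledVec x F)) := by
  ext ⟨k, a⟩ ⟨l, b⟩
  simp only [sum_apply, kroneckerMap_apply, vecMulVec_apply, Pi.star_apply, entangledVec,
    star_sum, star_mul', Finset.sum_mul_sum]
  exact Finset.sum_congr rfl fun i _ => Finset.sum_congr rfl fun j _ => by ring

theorem dotProduct_entangledVec_eq_sum [Fintype μ] [DecidableEq ι] {x : ι → κ → R}
    (hx : ∀ i j, star (x i) ⬝ᵥ x j = if i = j then 1 else 0) (F G : Matrix μ κ R) :
    star (entangledVec x F) ⬝ᵥ entangledVec x G = ∑ i, star (F *ᵥ x i) ⬝ᵥ (G *ᵥ x i) := by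
  calc star (entangledVec x F) ⬝ᵥ entangledVec x G
      = ∑ i, ∑ j, (star (x i) ⬝ᵥ x j) * (star (F *ᵥ x i) ⬝ᵥ (G *ᵥ x j)) := by
        simp only [dotProduct, Fintype.sum_prod_type, entangledVec, Pi.star_apply, star_sum,
          star_mul', Finset.sum_mul, Finset.mul_sum, mul_mul_mul_comm]
        simp_rw [Finset.sum_comm (γ := μ) (α := ι), Finset.sum_comm (γ := κ) (α := ι),
          Finset.sum_comm (γ := κ) (α := μ)]
        exact Finset.sum_comm
    _ = ∑ i, star (F *ᵥ x i) ⬝ᵥ (G *ᵥ x i) := by simp [hx]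

theorem sum_star_dotProduct_mulVec_eq_trace [DecidableEq κ] {x : κ → κ → R}
    (hx : ∀ i j, star (x i) ⬝ᵥ x j = if i = j then 1 else 0) (A : Matrix κ κ R) :
    ∑ i, star (x i) ⬝ᵥ (A *ᵥ x i) = A.trace := by
  -- a square matrix with orthonormal rows also has orthonormal columns
  have hcols : (of x)ᴴ * of x = 1 := mul_eq_one_comm.1 <| by
    ext i j
    simpa [mul_apply, dotProduct, mul_comm, one_apply, eq_comm] using hx j i
  calc ∑ i, star (x i) ⬝ᵥ (A *ᵥ x i) = ∑ k, ∑ l, A k l * ((of x)ᴴ * of x) k l := by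
        simp only [dotProduct, mulVec, mul_apply, conjTranspose_apply, of_apply, Pi.star_apply,
          Finset.mul_sum]
        rw [Finset.sum_comm]
        refine Finset.sum_congr rfl fun k _ => ?_
        rw [Finset.sum_comm]
        exact Finset.sum_congr rfl fun l _ => Finset.sum_congr rfl fun i _ => by ring
    _ = A.trace := by simp [hcols, one_apply, trace]

theorem dotProduct_entangledVec_eq_trace [Fintype μ] [DecidableEq κ] {x : κ → κ → R}
    (hx : ∀ i j, star (x i) ⬝ᵥ x j = if i = j then 1 else 0) (F G : Matrix μ κ R) :
    star (entangledVec x F) ⬝ᵥ entangledVec x G = (G * Fᴴ).trace := by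
  rw [dotProduct_entangledVec_eq_sum hx, trace_mul_comm, ← sum_star_dotProduct_mulVec_eq_trace hx]
  simp only [star_mulVec, ← dotProduct_mulVec, mulVec_mulVec]

end Entangled

end Matrix

open Matrix Kronecker in
/-- `{F_1,…,F_{mn}}` is orthonormal for the trace inner product iff
for every orthonormal basis `{x_1,…,x_n}` of `ℂ^n` the matrices
`P_r = ∑_{i,j} |x_i⟩⟨x_j| ⊗ F_r|x_i⟩⟨x_j|F_r†` are mutually orthogonal rank-one
orthogonal projections. -/
theorem stmt_6 {m n : ℕ} (F : Fin (m * n) → Matrix (Fin m) (Fin n) ℂ) :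
    (∀ r s, (F r * (F s)ᴴ).trace = if r = s then 1 else 0)
    ↔ (∀ x : Fin n → Fin n → ℂ,
        (∀ i j, star (x i) ⬝ᵥ x j = if i = j then 1 else 0) →
        (∀ r, ((∑ i, ∑ j, Matrix.vecMulVec (x i) (star (x j)) ⊗ₖ
              Matrix.vecMulVec (F r *ᵥ x i) (star (F r *ᵥ x j))) :
            Matrix (Fin n × Fin m) (Fin n × Fin m) ℂ).IsHermitian) ∧
        (∀ r, (∑ i, ∑ j, Matrix.vecMulVec (x i) (star (x j)) ⊗ₖ
              Matrix.vecMulVec (F r *ᵥ x i) (star (F r *ᵥ x j))) *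
            (∑ i, ∑ j, Matrix.vecMulVec (x i) (star (x j)) ⊗ₖ
              Matrix.vecMulVec (F r *ᵥ x i) (star (F r *ᵥ x j))) =
            ∑ i, ∑ j, Matrix.vecMulVec (x i) (star (x j)) ⊗ₖ
              Matrix.vecMulVec (F r *ᵥ x i) (star (F r *ᵥ x j))) ∧
        (∀ r, ((∑ i, ∑ j, Matrix.vecMulVec (x i) (star (x j)) ⊗ₖ
              Matrix.vecMulVec (F r *ᵥ x i) (star (F r *ᵥ x j))) :
            Matrix (Fin n × Fin m) (Fin n × Fin m) ℂ).rank = 1) ∧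
        (∀ r s, r ≠ s →
          (∑ i, ∑ j, Matrix.vecMulVec (x i) (star (x j)) ⊗ₖ
              Matrix.vecMulVec (F r *ᵥ x i) (star (F r *ᵥ x j))) *
            (∑ i, ∑ j, Matrix.vecMulVec (x i) (star (x j)) ⊗ₖ
              Matrix.vecMulVec (F s *ᵥ x i) (star (F s *ᵥ x j))) = 0)) := by
  simp only [sum_vecMulVec_kronecker_vecMulVec]
  constructor
  · intro h x hx
    refine (vecMulVec_star_orthogonal_projections_iff _).2 fun r s => ?_
    rw [dotProduct_entangledVec_eq_trace hx, h]
    simp only [@eq_comm _ s r]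
  · intro h r s
    have hstd : ∀ i j : Fin n, star (Pi.single i (1 : ℂ)) ⬝ᵥ Pi.single j 1 =
        if i = j then 1 else 0 := by
      simp [Pi.single_apply, eq_comm]
    have hFsr := (vecMulVec_star_orthogonal_projections_iff _).1 (h _ hstd) s r
    rw [dotProduct_entangledVec_eq_trace hstd] at hFsr
    simpa only [@eq_comm _ s r] using hFsr
end

section
/- If {F_1, …, F_{mn}} ⊆ M_{m,n}(ℂ) is an orthonormal basis with respect to the inner product (X,Y) = tr(XY†), then ∑_{j=1}^{mn} F_j F_j† = n I_m and ∑_{j=1}^{mn} F_j† F_j = m I_n. -/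
/-!
Stack the vectorised matrices `vec F_j` as the rows of a matrix `V`, indexed by `ι` and the
`mn` matrix positions. Orthonormality says `V Vᴴ = 1`; since `V` is square, also `Vᴴ V = 1`,
which is the completeness relation `∑_j conj (F_j a c) F_j a' c' = δ_{aa'} δ_{cc'}`.
Contracting it over the column index `c` gives `∑_j F_j F_jᴴ = n I_m`; the second identity is
the first one for the family `F_jᴴ`, which is orthonormal as well.
-/

namespace Matrix

variable {ι m n R : Type*} [Fintype m] [Fintype n] [CommRing R] [StarRing R]

theorem mul_conjTranspose_of_vec_apply (F : ι → Matrix m n R) (r s : ι) :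
    (of (fun j => vec (F j)) * (of fun j => vec (F j))ᴴ) r s = (F r * (F s)ᴴ).trace := by
  rw [mul_apply', trace_mul_comm, ← star_vec_dotProduct_vec, dotProduct_comm]
  rfl

theorem conjTranspose_of_vec_mul_eq_one [Fintype ι] [DecidableEq ι] [DecidableEq m] [DecidableEq n]
    (F : ι → Matrix m n R)
    (hF : ∀ r s, (F r * (F s)ᴴ).trace = if r = s then 1 else 0)
    (hcard : Fintype.card ι = Fintype.card m * Fintype.card n) :
    (of fun j => vec (F j))ᴴ * of (fun j => vec (F j)) = 1 := by
  refine (mul_eq_one_comm_of_card_eq _ _ _ (by simp [hcard, mul_comm])).mp (ext fun r s => ?_)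
  rw [mul_conjTranspose_of_vec_apply, hF, one_apply]

theorem sum_star_mul_eq_of_orthonormal [Fintype ι] [DecidableEq ι] [DecidableEq m] [DecidableEq n]
    (F : ι → Matrix m n R)
    (hF : ∀ r s, (F r * (F s)ᴴ).trace = if r = s then 1 else 0)
    (hcard : Fintype.card ι = Fintype.card m * Fintype.card n) (a a' : m) (c c' : n) :
    ∑ j, star (F j a c) * F j a' c' = if a = a' ∧ c = c' then 1 else 0 := by
  have := congr_fun₂ (conjTranspose_of_vec_mul_eq_one F hF hcard) (c, a) (c', a')
  rw [mul_apply] at this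
  simpa [vec, one_apply, and_comm] using this

theorem sum_mul_conjTranspose_eq_of_orthonormal [Fintype ι] [DecidableEq ι] [DecidableEq m]
    [DecidableEq n] (F : ι → Matrix m n R)
    (hF : ∀ r s, (F r * (F s)ᴴ).trace = if r = s then 1 else 0)
    (hcard : Fintype.card ι = Fintype.card m * Fintype.card n) :
    ∑ j, F j * (F j)ᴴ = (Fintype.card n : R) • (1 : Matrix m m R) := by
  ext a b
  calc (∑ j, F j * (F j)ᴴ) a b = ∑ c, ∑ j, star (F j b c) * F j a c := by
        simp only [sum_apply, mul_apply, conjTranspose_apply, mul_comm]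
        exact Finset.sum_comm
    _ = _ := by
        simp [sum_star_mul_eq_of_orthonormal F hF hcard, one_apply, eq_comm]

theorem sum_conjTranspose_mul_eq_of_orthonormal [Fintype ι] [DecidableEq ι] [DecidableEq m]
    [DecidableEq n] (F : ι → Matrix m n R)
    (hF : ∀ r s, (F r * (F s)ᴴ).trace = if r = s then 1 else 0)
    (hcard : Fintype.card ι = Fintype.card m * Fintype.card n) :
    ∑ j, (F j)ᴴ * F j = (Fintype.card m : R) • (1 : Matrix n n R) := by
  have hFstar : ∀ r s, ((F r)ᴴ * (F s)ᴴᴴ).trace = if r = s then 1 else 0 := fun r s => by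
    rw [conjTranspose_conjTranspose, trace_mul_comm, hF]
    exact if_congr eq_comm rfl rfl
  simpa using sum_mul_conjTranspose_eq_of_orthonormal _ hFstar (hcard.trans (mul_comm _ _))

end Matrix

open Matrix in
/-- for an orthonormal basis `{F_1,…,F_{mn}}` of `M_{m,n}(ℂ)` under
the trace inner product, `∑ F_j F_j† = n I_m` and `∑ F_j† F_j = m I_n`. -/
theorem stmt_7 {m n : ℕ} (F : Fin (m * n) → Matrix (Fin m) (Fin n) ℂ)
    (hF : ∀ r s, (F r * (F s)ᴴ).trace = if r = s then 1 else 0) :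
    (∑ j, F j * (F j)ᴴ) = (n : ℂ) • (1 : Matrix (Fin m) (Fin m) ℂ) ∧
    (∑ j, (F j)ᴴ * F j) = (m : ℂ) • (1 : Matrix (Fin n) (Fin n) ℂ) := by
  have hcard : Fintype.card (Fin (m * n)) = Fintype.card (Fin m) * Fintype.card (Fin n) := by
    simp
  exact ⟨by simpa using sum_mul_conjTranspose_eq_of_orthonormal F hF hcard,
    by simpa using sum_conjTranspose_mul_eq_of_orthonormal F hF hcard⟩
end

section
/- Let {F_j}_{j=1}^{mn} be an orthonormal basis of M_{m,n}(ℂ) under the trace inner product, and let L(X) = ∑_{j=1}^p γ_j F_j X F_j† − ∑_{j=p+1}^{mn} γ_j F_j X F_j† with all γ_j ≥ 0. Fix 1 ≤ k ≤ min{m,n} and suppose ξ_k := 1 − max W_k(∑_{j=p+1}^{mn} F_j† F_j) > 0. If γ_i ≥ ξ_k^{-1} · max W_k(∑_{j=p+1}^{mn} γ_j F_j† F_j) for all i = 1, …, p, then L is k-positive. -/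
open Matrix ComplexOrder

/-- The maximum of the `k`-numerical range of a matrix `A` (for Hermitian `A`
this is the sum of the `k` largest eigenvalues). -/
noncomputable def maxWk {N : ℕ} (k : ℕ) (A : Matrix (Fin N) (Fin N) ℂ) : ℝ :=
  sSup {t : ℝ | ∃ f : Fin k → (Fin N → ℂ),
    (∀ i j, star (f i) ⬝ᵥ f j = if i = j then 1 else 0) ∧
    t = (∑ j, star (f j) ⬝ᵥ A.mulVec (f j)).re}

/-!
A positive semidefinite `A` is a sum of rank-one matrices `v v†`, so it suffices to show
`x† (I_k ⊗ L)(v v†) x ≥ 0`. Writing `c_j = x† (I_k ⊗ F_j) v = tr (F_j G)` with `G = ∑_l v_l x_l†`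
of rank at most `k`, this is `∑_{j>p} γ_j |c_j|² ≤ ∑_{j≤p} γ_j |c_j|²`.

Factor `G = U U† G` through an isometry `U : ℂ^k → ℂ^n`. Cauchy–Schwarz gives
`|c_j|² ≤ ‖G‖² tr (U† F_j† F_j U)`, and `tr (U† C U) ≤ max W_k(C)`, so
`∑_{j>p} γ_j |c_j|² ≤ ‖G‖² max W_k(∑_{j>p} γ_j F_j† F_j)` and `∑_{j>p} |c_j|² ≤ (1 - ξ_k) ‖G‖²`.
Parseval for the basis `(F_j)` gives `∑_j |c_j|² = ‖G‖²`, hence `∑_{j≤p} |c_j|² ≥ ξ_k ‖G‖²`,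
and the lower bound on the `γ_i` with `i ≤ p` finishes the proof.
-/

open Finset
open scoped Kronecker

theorem norm_sum_mul_sq_le {ι R : Type*} [SeminormedRing R] (s : Finset ι) (f g : ι → R) :
    ‖∑ i ∈ s, f i * g i‖ ^ 2 ≤ (∑ i ∈ s, ‖f i‖ ^ 2) * ∑ i ∈ s, ‖g i‖ ^ 2 :=
  calc ‖∑ i ∈ s, f i * g i‖ ^ 2 ≤ (∑ i ∈ s, ‖f i‖ * ‖g i‖) ^ 2 := by
        gcongr
        exact (norm_sum_le _ _).trans (sum_le_sum fun i _ => norm_mul_le _ _)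
    _ ≤ _ := sum_mul_sq_le_sq_mul_sq _ _ _

namespace Matrix

variable {ι l m n : Type*} [Fintype m] [Fintype n]

theorem star_dotProduct_self (v : n → ℂ) : star v ⬝ᵥ v = ((∑ i, ‖v i‖ ^ 2 : ℝ) : ℂ) := by
  simp [dotProduct, Complex.conj_mul']

theorem re_trace_conjTranspose_mul_self (A : Matrix m n ℂ) :
    (Aᴴ * A).trace.re = ∑ i, ∑ j, ‖A i j‖ ^ 2 := by
  simp only [trace, diag_apply, mul_apply, conjTranspose_apply, RCLike.star_def,
    Complex.conj_mul', Complex.re_sum, ← Complex.ofReal_pow, Complex.ofReal_re]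
  exact sum_comm

theorem norm_trace_mul_sq_le (A : Matrix m n ℂ) (B : Matrix n m ℂ) :
    ‖(A * B).trace‖ ^ 2 ≤ (Aᴴ * A).trace.re * (Bᴴ * B).trace.re := by
  have h := norm_sum_mul_sq_le (univ : Finset (m × n)) (fun p => A p.1 p.2) (fun p => B p.2 p.1)
  simp only [← univ_product_univ, sum_product] at h
  rw [re_trace_conjTranspose_mul_self, re_trace_conjTranspose_mul_self, sum_comm (γ := n)]
  simpa only [trace, diag_apply, mul_apply] using h

theorem sum_norm_trace_mul_sq [Fintype ι] [DecidableEq ι] (F : ι → Matrix m n ℂ)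
    (hF : ∀ r s, (F r * (F s)ᴴ).trace = if r = s then 1 else 0)
    (hcard : Fintype.card ι = Fintype.card m * Fintype.card n) (G : Matrix n m ℂ) :
    ∑ j, ‖(F j * G).trace‖ ^ 2 = (Gᴴ * G).trace.re := by
  classical
  set V : Matrix ι (m × n) ℂ := of fun j p => F j p.1 p.2
  have hV : V * Vᴴ = 1 := by
    ext r s
    rw [one_apply, ← hF]
    simp [V, trace, mul_apply, Fintype.sum_prod_type]
  -- `V` is square up to reindexing, so its orthonormal rows are also a complete system.
  have hV' : Vᴴ * V = 1 :=
    (mul_eq_one_comm_of_equiv (Fintype.equivOfCardEq (by simpa using hcard))).mp hV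
  set g : m × n → ℂ := fun p => G p.2 p.1
  have hc : ∀ j, (F j * G).trace = (V *ᵥ g) j := fun j => by
    simp [V, g, trace, mul_apply, mulVec, dotProduct, Fintype.sum_prod_type]
  have hiso : star (V *ᵥ g) ⬝ᵥ (V *ᵥ g) = star g ⬝ᵥ g := by
    rw [star_mulVec, ← dotProduct_mulVec, mulVec_mulVec, hV', one_mulVec]
  rw [star_dotProduct_self, star_dotProduct_self, Complex.ofReal_inj] at hiso
  simp only [hc, hiso, re_trace_conjTranspose_mul_self, g, Fintype.sum_prod_type]
  exact sum_comm

theorem exists_isometry_mul_conjTranspose_mul_diagonal [DecidableEq n] {k : ℕ} (d : n → ℂ)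
    (hd : #{i | d i ≠ 0} ≤ k) (hk : k ≤ Fintype.card n) :
    ∃ S : Matrix n (Fin k) ℂ, Sᴴ * S = 1 ∧ S * Sᴴ * diagonal d = diagonal d := by
  obtain ⟨T, hdT, hTk⟩ := exists_superset_card_eq hd hk
  let e := T.equivFinOfCardEq hTk
  let σ : Fin k ↪ n := e.symm.toEmbedding.trans (Function.Embedding.subtype (· ∈ T))
  have hσ : ∀ i, d i ≠ 0 → ∃ l, σ l = i := fun i hi =>
    ⟨e ⟨i, hdT (by simpa using hi)⟩, by simp [σ]⟩
  refine ⟨(1 : Matrix n n ℂ).submatrix id σ, ?_, ?_⟩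
  · ext l l'
    simp [mul_apply, one_apply, σ.injective.eq_iff]
  · ext i j
    rw [mul_diagonal, diagonal_apply]
    by_cases hj : d j = 0
    · simp +contextual [hj]
    obtain ⟨l, rfl⟩ := hσ j hj
    simp only [mul_apply, conjTranspose_apply, submatrix_apply, id, one_apply,
      σ.injective.eq_iff]
    split_ifs with h <;> simp [h]

theorem exists_isometry_mul_conjTranspose_mul_eq [DecidableEq n] {k : ℕ} (G : Matrix n m ℂ)
    (hG : G.rank ≤ k) (hk : k ≤ Fintype.card n) :
    ∃ U : Matrix n (Fin k) ℂ, Uᴴ * U = 1 ∧ U * Uᴴ * G = G := by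
  -- `U` consists of `k` eigenvectors of `G Gᴴ`, among them all those with nonzero eigenvalue.
  have hH : (G * Gᴴ).IsHermitian := isHermitian_mul_conjTranspose_self G
  set V : Matrix n n ℂ := (hH.eigenvectorUnitary : Matrix n n ℂ)
  have hspec : G * Gᴴ = V * diagonal (fun i => (hH.eigenvalues i : ℂ)) * Vᴴ :=
    hH.spectral_theorem
  have hVV : Vᴴ * V = 1 := Unitary.coe_star_mul_self _
  obtain ⟨S, hSS, hSD⟩ := exists_isometry_mul_conjTranspose_mul_diagonal
    (fun i => (hH.eigenvalues i : ℂ)) (by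
      simpa [← Fintype.card_subtype, ← hH.rank_eq_card_non_zero_eigs,
        rank_self_mul_conjTranspose] using hG) hk
  refine ⟨V * S, ?_, ?_⟩
  · rw [conjTranspose_mul, Matrix.mul_assoc, ← Matrix.mul_assoc Vᴴ, hVV, Matrix.one_mul, hSS]
  · set P := V * S * (V * S)ᴴ
    have hPH : P * (G * Gᴴ) = G * Gᴴ := by
      rw [hspec]
      conv_rhs => rw [← hSD]
      simp only [P, conjTranspose_mul, Matrix.mul_assoc]
      rw [← Matrix.mul_assoc Vᴴ V, hVV, Matrix.one_mul]
    have hR : ((1 - P) * G) * ((1 - P) * G)ᴴ = 0 := by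
      rw [conjTranspose_mul, ← Matrix.mul_assoc, Matrix.mul_assoc (1 - P), Matrix.sub_mul,
        Matrix.one_mul, hPH, sub_self, Matrix.zero_mul]
    have h0 : (1 - P) * G = 0 := by
      rw [← conjTranspose_eq_zero, ← conjTranspose_mul_self_eq_zero, conjTranspose_conjTranspose]
      exact hR
    rwa [Matrix.sub_mul, Matrix.one_mul, sub_eq_zero, eq_comm] at h0

theorem star_dotProduct_mulVec_conj_vecMulVec [Fintype l] (K : Matrix l m ℂ) (v : m → ℂ)
    (x : l → ℂ) :
    star x ⬝ᵥ (K * vecMulVec v (star v) * Kᴴ) *ᵥ x = ((‖star x ⬝ᵥ K *ᵥ v‖ ^ 2 : ℝ) : ℂ) := by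
  rw [mul_vecMulVec, vecMulVec_mul, ← star_mulVec, vecMulVec_mulVec, op_smul_eq_smul,
    dotProduct_smul, smul_eq_mul, star_dotProduct, Complex.ofReal_pow, ← Complex.conj_mul']
  rfl

theorem PosSemidef.sum_smul_conj_sub_sum_smul_conj [Fintype l] {A : Matrix m m ℂ}
    (hA : A.PosSemidef) (K : ι → Matrix l m ℂ) (γ : ι → ℝ) (s t : Finset ι)
    (h : ∀ x w, ∑ j ∈ t, γ j * ‖star x ⬝ᵥ K j *ᵥ w‖ ^ 2 ≤
      ∑ j ∈ s, γ j * ‖star x ⬝ᵥ K j *ᵥ w‖ ^ 2) :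
    (∑ j ∈ s, (γ j : ℂ) • (K j * A * (K j)ᴴ) -
      ∑ j ∈ t, (γ j : ℂ) • (K j * A * (K j)ᴴ)).PosSemidef := by
  have hH : ∀ u : Finset ι, (∑ j ∈ u, (γ j : ℂ) • (K j * A * (K j)ᴴ)).IsHermitian := fun u =>
    isSelfAdjoint_sum u fun j _ =>
      (hA.mul_mul_conjTranspose_same (K j)).isHermitian.smul (Complex.conj_ofReal _)
  refine .of_dotProduct_mulVec_nonneg ((hH s).sub (hH t)) fun x => ?_
  obtain ⟨r, v, rfl⟩ := posSemidef_iff_eq_sum_vecMulVec.mp hA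
  have hq : ∀ u : Finset ι, star x ⬝ᵥ (∑ j ∈ u, (γ j : ℂ) •
      (K j * (∑ i, vecMulVec (v i) (star (v i))) * (K j)ᴴ)) *ᵥ x =
      ((∑ i, ∑ j ∈ u, γ j * ‖star x ⬝ᵥ K j *ᵥ v i‖ ^ 2 : ℝ) : ℂ) := fun u => by
    simp only [sum_mulVec, dotProduct_sum, smul_mulVec, dotProduct_smul, Matrix.mul_sum,
      Matrix.sum_mul, star_dotProduct_mulVec_conj_vecMulVec, smul_eq_mul]
    push_cast
    rw [sum_comm]
    simp only [mul_sum]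
  rw [sub_mulVec, dotProduct_sub, hq, hq, ← Complex.ofReal_sub, Complex.zero_le_real, sub_nonneg]
  exact sum_le_sum fun i _ => h x (v i)

theorem one_kronecker_mul_mul_conjTranspose_apply [Fintype ι] [DecidableEq ι]
    (X : Matrix l n ℂ) (A : Matrix (ι × n) (ι × n) ℂ) (u v : ι × l) :
    (((1 : Matrix ι ι ℂ) ⊗ₖ X) * A * ((1 : Matrix ι ι ℂ) ⊗ₖ X)ᴴ) u v =
      (X * of (fun a b => A (u.1, a) (v.1, b)) * Xᴴ) u.2 v.2 := by
  simp [mul_apply, one_apply, Fintype.sum_prod_type, sum_mul, apply_ite (starRingEnd ℂ)]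

theorem star_dotProduct_one_kronecker_mulVec [Fintype ι] [DecidableEq ι] (X : Matrix m n ℂ)
    (x : ι × m → ℂ) (w : ι × n → ℂ) :
    star x ⬝ᵥ ((1 : Matrix ι ι ℂ) ⊗ₖ X) *ᵥ w =
      (X * ((of fun b l => w (l, b)) * of fun l a => star (x (l, a)))).trace := by
  simp only [dotProduct, Pi.star_apply, RCLike.star_def, mulVec, kroneckerMap_apply, one_apply,
    ite_mul, one_mul, zero_mul, Fintype.sum_prod_type, sum_ite_irrel, sum_const_zero, sum_ite_eq,
    mem_univ, if_true, mul_sum, trace, diag_apply, mul_apply, of_apply]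
  rw [sum_comm]
  refine sum_congr rfl fun a _ => ?_
  rw [sum_comm]
  exact sum_congr rfl fun b _ => sum_congr rfl fun l _ => by ring

end Matrix

theorem norm_le_one_of_star_dotProduct_self_eq_one {n : Type*} [Fintype n] {v : n → ℂ}
    (hv : star v ⬝ᵥ v = 1) (a : n) : ‖v a‖ ≤ 1 := by
  rw [star_dotProduct_self, Complex.ofReal_eq_one] at hv
  have : ‖v a‖ ^ 2 ≤ 1 := hv ▸ single_le_sum (fun b _ => sq_nonneg ‖v b‖) (mem_univ a)
  nlinarith [norm_nonneg (v a)]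

theorem bddAbove_maxWk_set {N : ℕ} (k : ℕ) (A : Matrix (Fin N) (Fin N) ℂ) :
    BddAbove {t : ℝ | ∃ f : Fin k → (Fin N → ℂ),
      (∀ i j, star (f i) ⬝ᵥ f j = if i = j then 1 else 0) ∧
      t = (∑ j, star (f j) ⬝ᵥ A.mulVec (f j)).re} := by
  refine ⟨k * ∑ a, ∑ b, ‖A a b‖, ?_⟩
  rintro t ⟨f, hf, rfl⟩
  have hf1 : ∀ j a, ‖f j a‖ ≤ 1 := fun j =>
    norm_le_one_of_star_dotProduct_self_eq_one (by simpa using hf j j)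
  have hterm : ∀ j, ‖star (f j) ⬝ᵥ A *ᵥ f j‖ ≤ ∑ a, ∑ b, ‖A a b‖ := by
    intro j
    simp only [dotProduct, mulVec, mul_sum]
    refine (norm_sum_le _ _).trans (sum_le_sum fun a _ => (norm_sum_le _ _).trans
      (sum_le_sum fun b _ => ?_))
    rw [norm_mul, norm_mul, Pi.star_apply, norm_star]
    calc ‖f j a‖ * (‖A a b‖ * ‖f j b‖) ≤ 1 * (‖A a b‖ * 1) := by
          gcongr
          exacts [hf1 j a, hf1 j b]
      _ = ‖A a b‖ := by ring
  calc (∑ j, star (f j) ⬝ᵥ A *ᵥ f j).re ≤ ∑ j, ‖star (f j) ⬝ᵥ A *ᵥ f j‖ :=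
        (Complex.re_le_norm _).trans (norm_sum_le _ _)
    _ ≤ k * ∑ a, ∑ b, ‖A a b‖ := by
        simpa using sum_le_sum fun j (_ : j ∈ univ) => hterm j

theorem le_maxWk {N k : ℕ} (A : Matrix (Fin N) (Fin N) ℂ) {U : Matrix (Fin N) (Fin k) ℂ}
    (hU : Uᴴ * U = 1) : (Uᴴ * A * U).trace.re ≤ maxWk k A := by
  refine le_csSup (bddAbove_maxWk_set k A) ⟨Uᵀ, fun i j => ?_, ?_⟩
  · rw [← one_apply, ← hU]
    simp [mul_apply, dotProduct]
  · congr 1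
    simp only [trace, diag_apply, mul_apply, dotProduct, mulVec, mul_sum, sum_mul,
      transpose_apply, conjTranspose_apply, Pi.star_apply, mul_assoc]
    exact sum_congr rfl fun _ _ => sum_comm

theorem sum_compl_mul_le_sum_mul {ι : Type*} [Fintype ι] [DecidableEq ι] (s : Finset ι)
    {a t γ : ι → ℝ} {N ω μ : ℝ} (ha0 : ∀ j, 0 ≤ a j) (haN : ∑ j, a j = N)
    (hat : ∀ j, a j ≤ N * t j) (ht0 : ∀ j, 0 ≤ t j) (hγ : ∀ j ∈ sᶜ, 0 ≤ γ j)
    (hω : ∑ j ∈ sᶜ, t j ≤ ω) (hμ : ∑ j ∈ sᶜ, γ j * t j ≤ μ) (hω1 : 0 < 1 - ω)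
    (hγs : ∀ i ∈ s, (1 - ω)⁻¹ * μ ≤ γ i) :
    ∑ j ∈ sᶜ, γ j * a j ≤ ∑ j ∈ s, γ j * a j := by
  have hN : 0 ≤ N := haN ▸ sum_nonneg fun j _ => ha0 j
  have hμ0 : 0 ≤ μ := (sum_nonneg fun j hj => mul_nonneg (hγ j hj) (ht0 j)).trans hμ
  have hneg : ∑ j ∈ sᶜ, γ j * a j ≤ N * μ :=
    calc ∑ j ∈ sᶜ, γ j * a j ≤ ∑ j ∈ sᶜ, N * (γ j * t j) :=
          sum_le_sum fun j hj => by nlinarith [hat j, hγ j hj]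
      _ ≤ N * μ := by rw [← mul_sum]; exact mul_le_mul_of_nonneg_left hμ hN
  have hpos : N * (1 - ω) ≤ ∑ j ∈ s, a j := by
    have hsc : ∑ j ∈ sᶜ, a j ≤ N * ω :=
      calc ∑ j ∈ sᶜ, a j ≤ ∑ j ∈ sᶜ, N * t j := sum_le_sum fun j _ => hat j
        _ ≤ N * ω := by rw [← mul_sum]; exact mul_le_mul_of_nonneg_left hω hN
    linarith [sum_add_sum_compl s a]
  calc ∑ j ∈ sᶜ, γ j * a j ≤ N * μ := hneg
    _ = (1 - ω)⁻¹ * μ * (N * (1 - ω)) := by field_simp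
    _ ≤ (1 - ω)⁻¹ * μ * ∑ j ∈ s, a j := by gcongr
    _ ≤ ∑ j ∈ s, γ j * a j := by
        rw [mul_sum]
        exact sum_le_sum fun i hi => mul_le_mul_of_nonneg_right (hγs i hi) (ha0 i)

theorem sum_compl_mul_norm_trace_sq_le {ι m : Type*} [Fintype ι] [DecidableEq ι] [Fintype m]
    {n k : ℕ} (hkn : k ≤ n) (F : ι → Matrix m (Fin n) ℂ)
    (hF : ∀ r s, (F r * (F s)ᴴ).trace = if r = s then 1 else 0)
    (hcard : Fintype.card ι = Fintype.card m * n) (γ : ι → ℝ) (s : Finset ι)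
    (hγ : ∀ j ∈ sᶜ, 0 ≤ γ j)
    (hξ : 0 < 1 - maxWk k (∑ j ∈ sᶜ, (F j)ᴴ * F j))
    (hγs : ∀ i ∈ s, γ i ≥ (1 - maxWk k (∑ j ∈ sᶜ, (F j)ᴴ * F j))⁻¹ *
      maxWk k (∑ j ∈ sᶜ, (γ j : ℂ) • ((F j)ᴴ * F j)))
    (G : Matrix (Fin n) m ℂ) (hG : G.rank ≤ k) :
    ∑ j ∈ sᶜ, γ j * ‖(F j * G).trace‖ ^ 2 ≤ ∑ j ∈ s, γ j * ‖(F j * G).trace‖ ^ 2 := by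
  obtain ⟨U, hU, hUG⟩ := exists_isometry_mul_conjTranspose_mul_eq G hG (by simpa using hkn)
  set t : ι → ℝ := fun j => ((F j * U)ᴴ * (F j * U)).trace.re
  have ht : ∀ (c : ι → ℝ) (s' : Finset ι),
      ∑ j ∈ s', c j * t j = (Uᴴ * (∑ j ∈ s', (c j : ℂ) • ((F j)ᴴ * F j)) * U).trace.re := by
    intro c s'
    simp only [t, Matrix.mul_sum, Matrix.sum_mul, trace_sum, Complex.re_sum, Matrix.mul_smul,
      Matrix.smul_mul, trace_smul, smul_eq_mul, Complex.re_ofReal_mul, conjTranspose_mul,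
      Matrix.mul_assoc]
  have hCS : ∀ j, ‖(F j * G).trace‖ ^ 2 ≤ (Gᴴ * G).trace.re * t j := fun j =>
    calc ‖(F j * G).trace‖ ^ 2 = ‖((F j * U) * (Uᴴ * G)).trace‖ ^ 2 := by
          rw [Matrix.mul_assoc, ← Matrix.mul_assoc U, hUG]
      _ ≤ t j * ((Uᴴ * G)ᴴ * (Uᴴ * G)).trace.re := norm_trace_mul_sq_le _ _
      _ = (Gᴴ * G).trace.re * t j := by
          rw [mul_comm, conjTranspose_mul, conjTranspose_conjTranspose, Matrix.mul_assoc,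
            ← Matrix.mul_assoc U, hUG]
  have ht0 : ∀ j, 0 ≤ t j := fun j => by
    rw [show t j = _ from re_trace_conjTranspose_mul_self _]
    positivity
  have hω : ∑ j ∈ sᶜ, t j ≤ maxWk k (∑ j ∈ sᶜ, (F j)ᴴ * F j) := by
    simpa using (ht 1 sᶜ).le.trans (le_maxWk _ hU)
  have hμ : ∑ j ∈ sᶜ, γ j * t j ≤ maxWk k (∑ j ∈ sᶜ, (γ j : ℂ) • ((F j)ᴴ * F j)) :=
    (ht γ sᶜ).le.trans (le_maxWk _ hU)
  exact sum_compl_mul_le_sum_mul s (fun j => sq_nonneg _)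
    (sum_norm_trace_mul_sq F hF (by simpa using hcard) G) hCS ht0 hγ hω hμ hξ hγs

theorem stmt_9_general {m n p k : ℕ} (hkn : k ≤ n)
    (F : Fin (m * n) → Matrix (Fin m) (Fin n) ℂ)
    (hF : ∀ r s, (F r * (F s)ᴴ).trace = if r = s then 1 else 0)
    (γ : Fin (m * n) → ℝ) (hγ : ∀ j, 0 ≤ γ j)
    (L : Matrix (Fin n) (Fin n) ℂ → Matrix (Fin m) (Fin m) ℂ)
    (hL : ∀ X, L X =
      (∑ j ∈ Finset.univ.filter (fun j : Fin (m * n) => (j : ℕ) < p),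
        (γ j : ℂ) • (F j * X * (F j)ᴴ)) -
      ∑ j ∈ Finset.univ.filter (fun j : Fin (m * n) => ¬ (j : ℕ) < p),
        (γ j : ℂ) • (F j * X * (F j)ᴴ))
    (hξ : 0 < 1 - maxWk k
      (∑ j ∈ Finset.univ.filter (fun j : Fin (m * n) => ¬ (j : ℕ) < p),
        (F j)ᴴ * F j))
    (hγbig : ∀ i ∈ Finset.univ.filter (fun j : Fin (m * n) => (j : ℕ) < p),
      γ i ≥ (1 - maxWk k
          (∑ j ∈ Finset.univ.filter (fun j : Fin (m * n) => ¬ (j : ℕ) < p),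
            (F j)ᴴ * F j))⁻¹ *
        maxWk k (∑ j ∈ Finset.univ.filter (fun j : Fin (m * n) => ¬ (j : ℕ) < p),
          (γ j : ℂ) • ((F j)ᴴ * F j))) :
    ∀ A : Matrix (Fin k × Fin n) (Fin k × Fin n) ℂ, A.PosSemidef →
      (Matrix.of fun u v : Fin k × Fin m =>
        L (Matrix.of fun a b => A (u.1, a) (v.1, b)) u.2 v.2).PosSemidef := by
  intro A hA
  rw [← compl_filter] at hL hξ hγbig
  set s := univ.filter fun j : Fin (m * n) => (j : ℕ) < p
  set K : Fin (m * n) → Matrix (Fin k × Fin m) (Fin k × Fin n) ℂ := fun j => 1 ⊗ₖ F j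
  have hblock : (of fun u v : Fin k × Fin m =>
        L (of fun a b => A (u.1, a) (v.1, b)) u.2 v.2) =
      ∑ j ∈ s, (γ j : ℂ) • (K j * A * (K j)ᴴ) - ∑ j ∈ sᶜ, (γ j : ℂ) • (K j * A * (K j)ᴴ) := by
    ext u v
    simp only [of_apply, hL, Matrix.sub_apply, Matrix.sum_apply, Matrix.smul_apply, K,
      one_kronecker_mul_mul_conjTranspose_apply]
  rw [hblock]
  refine hA.sum_smul_conj_sub_sum_smul_conj K γ s sᶜ fun x w => ?_
  simp only [K, star_dotProduct_one_kronecker_mulVec]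
  exact sum_compl_mul_norm_trace_sq_le hkn F hF (by simp) γ s (fun j _ => hγ j) hξ hγbig _
    ((rank_mul_le_left _ _).trans ((rank_le_card_width _).trans_eq (Fintype.card_fin k)))

/-- sufficient condition for `k`-positivity of
`L(X) = ∑_{j≤p} γ_j F_j X F_j† − ∑_{j>p} γ_j F_j X F_j†` in terms of the
`k`-numerical range. -/
theorem stmt_9 {m n p k : ℕ} (hk1 : 1 ≤ k) (hkm : k ≤ m) (hkn : k ≤ n)
    (F : Fin (m * n) → Matrix (Fin m) (Fin n) ℂ)
    (hF : ∀ r s, (F r * (F s)ᴴ).trace = if r = s then 1 else 0)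
    (γ : Fin (m * n) → ℝ) (hγ : ∀ j, 0 ≤ γ j)
    (L : Matrix (Fin n) (Fin n) ℂ → Matrix (Fin m) (Fin m) ℂ)
    (hL : ∀ X, L X =
      (∑ j ∈ Finset.univ.filter (fun j : Fin (m * n) => (j : ℕ) < p),
        (γ j : ℂ) • (F j * X * (F j)ᴴ)) -
      ∑ j ∈ Finset.univ.filter (fun j : Fin (m * n) => ¬ (j : ℕ) < p),
        (γ j : ℂ) • (F j * X * (F j)ᴴ))
    (hξ : 0 < 1 - maxWk k
      (∑ j ∈ Finset.univ.filter (fun j : Fin (m * n) => ¬ (j : ℕ) < p),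
        (F j)ᴴ * F j))
    (hγbig : ∀ i ∈ Finset.univ.filter (fun j : Fin (m * n) => (j : ℕ) < p),
      γ i ≥ (1 - maxWk k
          (∑ j ∈ Finset.univ.filter (fun j : Fin (m * n) => ¬ (j : ℕ) < p),
            (F j)ᴴ * F j))⁻¹ *
        maxWk k (∑ j ∈ Finset.univ.filter (fun j : Fin (m * n) => ¬ (j : ℕ) < p),
          (γ j : ℂ) • ((F j)ᴴ * F j))) :
    ∀ A : Matrix (Fin k × Fin n) (Fin k × Fin n) ℂ, A.PosSemidef →
      (Matrix.of fun u v : Fin k × Fin m =>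
        L (Matrix.of fun a b => A (u.1, a) (v.1, b)) u.2 v.2).PosSemidef :=
  stmt_9_general hkn F hF γ hγ L hL hξ hγbig
end

section
/- Let D = (d_{ij}) be an n×n matrix with nonnegative entries and let L : M_n(ℂ) → M_n(ℂ) be the D-type map L(A) = diag(∑_k a_{kk} d_{k1}, …, ∑_k a_{kk} d_{kn}) − A. Then L is positive if and only if d_{ii} > 0 for all i and, for every vector u = (u_1, …, u_n) ∈ ℂ^n with all entries nonzero, ∑_{j=1}^n |u_j|² / (∑_{i=1}^n d_{ij} |u_i|²) ≤ 1. -/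
/-!
Every positive semidefinite matrix is a sum of rank-one matrices `v v*`, so `L` is positive iff
each `L (v v*)` is, i.e. iff `|⟨w, v⟩|² ≤ ∑ⱼ sⱼ |wⱼ|²` for all `w`, where `sⱼ = ∑ᵢ dᵢⱼ |vᵢ|²`.
By a weighted Cauchy–Schwarz inequality, with equality at `w = v / s`, this holds for all `w`
exactly when `∑ⱼ |vⱼ|² / sⱼ ≤ 1` (given `sⱼ > 0` wherever `vⱼ ≠ 0`). Taking `v = eᵢ` forces
`dᵢᵢ ≥ 1`; conversely, the bound for vectors with vanishing entries follows from the bound for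
nonvanishing ones by continuity, replacing `|vᵢ|²` by `|vᵢ|² + ε`.
-/

open Matrix ComplexOrder

section CauchySchwarz

variable {ι : Type*}

theorem sq_sum_mul_le_sum_sq_div_mul_sum_mul_sq (t : Finset ι) {s x y : ι → ℝ}
    (hs : ∀ j ∈ t, 0 ≤ s j) (hxs : ∀ j ∈ t, s j = 0 → x j = 0) :
    (∑ j ∈ t, x j * y j) ^ 2 ≤ (∑ j ∈ t, x j ^ 2 / s j) * ∑ j ∈ t, s j * y j ^ 2 := by
  refine Finset.sum_sq_le_sum_mul_sum_of_sq_le_mul t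
    (fun j hj => div_nonneg (sq_nonneg _) (hs j hj))
    (fun j hj => mul_nonneg (hs j hj) (sq_nonneg _)) fun j hj => le_of_eq ?_
  by_cases h : s j = 0
  · simp [hxs j hj h]
  · field_simp

variable [Fintype ι]

theorem normSq_dotProduct_le (s : ι → ℝ) (v w : ι → ℂ) (hs : ∀ j, 0 ≤ s j)
    (hvs : ∀ j, s j = 0 → v j = 0) :
    Complex.normSq (star w ⬝ᵥ v) ≤
      (∑ j, Complex.normSq (v j) / s j) * ∑ j, s j * Complex.normSq (w j) := by
  have hnorm : ‖star w ⬝ᵥ v‖ ≤ ∑ j, ‖v j‖ * ‖w j‖ := by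
    refine (norm_sum_le _ _).trans (le_of_eq ?_)
    simp [mul_comm]
  simp only [Complex.normSq_eq_norm_sq]
  calc ‖star w ⬝ᵥ v‖ ^ 2 ≤ (∑ j, ‖v j‖ * ‖w j‖) ^ 2 := by gcongr
    _ ≤ _ := sq_sum_mul_le_sum_sq_div_mul_sum_mul_sq _ (fun j _ => hs j)
      fun j _ h => by simp [hvs j h]

/-- The test vector `w = v / s` gives equality in `normSq_dotProduct_le`. -/
theorem sum_normSq_div_le_one (s : ι → ℝ) (v : ι → ℂ)
    (h : ∀ w, Complex.normSq (star w ⬝ᵥ v) ≤ ∑ j, s j * Complex.normSq (w j)) :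
    ∑ j, Complex.normSq (v j) / s j ≤ 1 := by
  set F := ∑ j, Complex.normSq (v j) / s j
  have hdot : star (fun j => v j / s j) ⬝ᵥ v = F := by
    simp only [dotProduct, Pi.star_apply, F]
    push_cast
    refine Finset.sum_congr rfl fun j _ => ?_
    rw [star_div₀, Complex.star_def, Complex.conj_ofReal, Complex.normSq_eq_conj_mul_self]
    ring
  have hquad : ∑ j, s j * Complex.normSq (v j / s j) = F := by
    refine Finset.sum_congr rfl fun j _ => ?_
    rw [Complex.normSq_div, Complex.normSq_ofReal]
    by_cases h : s j = 0
    · simp [h]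
    · field_simp
  have hFF : F * F ≤ F := by
    simpa only [hdot, hquad, Complex.normSq_ofReal] using h fun j => v j / s j
  nlinarith

end CauchySchwarz

theorem sum_div_le_one_of_nonneg {ι : Type*} [Fintype ι] (d : ι → ι → ℝ) (hd : ∀ i j, 0 ≤ d i j) (hdd : ∀ i, 0 < d i i)
    (h : ∀ a : ι → ℝ, (∀ i, 0 < a i) → ∑ j, a j / ∑ i, d i j * a i ≤ 1)
    {a : ι → ℝ} (ha : ∀ i, 0 ≤ a i) : ∑ j, a j / ∑ i, d i j * a i ≤ 1 := by
  set g : ℝ → ℝ := fun ε => ∑ j, a j / ∑ i, d i j * (a i + ε)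
  have hg : ContinuousAt g 0 := by
    refine tendsto_finsetSum _ fun j _ => ?_
    by_cases haj : a j = 0
    · simp [haj]
    · refine ContinuousAt.div continuousAt_const (by fun_prop) ?_
      simp only [add_zero]
      exact (Finset.single_le_sum (fun i _ => mul_nonneg (hd i j) (ha i)) (Finset.mem_univ j)
        |>.trans_lt' (mul_pos (hdd j) ((ha j).lt_of_ne' haj))).ne'
  have hle : ∀ ε ∈ Set.Ioi (0 : ℝ), g ε ≤ 1 := fun ε (hε : 0 < ε) => by
    refine (Finset.sum_le_sum fun j _ => ?_).trans (h (a + fun _ => ε) fun i => ?_)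
    · exact div_le_div_of_nonneg_right (by simp [hε.le])
        (Finset.sum_nonneg fun i _ => mul_nonneg (hd i j) (by linarith [ha i]))
    · simp only [Pi.add_apply]; linarith [ha i]
  simpa [g] using le_of_tendsto (hg.tendsto.mono_left nhdsWithin_le_nhds)
    (eventually_nhdsWithin_of_forall hle)

theorem forall_posSemidef_map_iff_vecMulVec {𝕜 n m : Type*} [RCLike 𝕜] [Fintype n] [Fintype m]
    (f : Matrix n n 𝕜 →ₗ[𝕜] Matrix m m 𝕜) :
    (∀ A, A.PosSemidef → (f A).PosSemidef) ↔ ∀ v, (f (vecMulVec v (star v))).PosSemidef := by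
  refine ⟨fun h v => h _ (posSemidef_vecMulVec_self_star v), fun h A hA => ?_⟩
  obtain ⟨k, v, rfl⟩ := posSemidef_iff_eq_sum_vecMulVec.mp hA
  rw [map_sum]
  exact posSemidef_sum _ fun i _ => h (v i)

section DTypeMap

variable {ι : Type*} [Fintype ι]

theorem star_mul_self_eq_normSq (z : ℂ) : star z * z = Complex.normSq z :=
  Complex.normSq_eq_conj_mul_self.symm

omit [Fintype ι] in
theorem vecMulVec_self_star_apply_self (v : ι → ℂ) (i : ι) :
    vecMulVec v (star v) i i = Complex.normSq (v i) := by
  rw [vecMulVec_apply, Pi.star_apply, mul_comm, star_mul_self_eq_normSq]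

theorem dotProduct_vecMulVec_mulVec (v w : ι → ℂ) :
    star w ⬝ᵥ vecMulVec v (star v) *ᵥ w = Complex.normSq (star w ⬝ᵥ v) := by
  rw [vecMulVec_mulVec, ← star_mul_self_eq_normSq, star_dotProduct v w, dotProduct_smul]
  simp [mul_comm]

variable [DecidableEq ι] (d : ι → ι → ℝ)

def dTypeMap : Matrix ι ι ℂ →ₗ[ℂ] Matrix ι ι ℂ where
  toFun A := diagonal (fun j => ∑ i, (d i j : ℂ) * A i i) - A
  map_add' A B := by
    ext i j
    by_cases h : i = j <;> simp [h, mul_add, Finset.sum_add_distrib] <;> ring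
  map_smul' c A := by
    ext i j
    by_cases h : i = j <;> simp [h, Finset.mul_sum, mul_left_comm, mul_sub]

theorem dotProduct_dTypeMap_mulVec (A : Matrix ι ι ℂ) (w : ι → ℂ) :
    star w ⬝ᵥ dTypeMap d A *ᵥ w =
      ∑ j, (∑ i, (d i j : ℂ) * A i i) * Complex.normSq (w j) - star w ⬝ᵥ A *ᵥ w := by
  simp only [dTypeMap, LinearMap.coe_mk, AddHom.coe_mk, sub_mulVec, dotProduct_sub]
  simp only [dotProduct, mulVec_diagonal, Pi.star_apply, ← star_mul_self_eq_normSq]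
  congr 1
  exact Finset.sum_congr rfl fun j _ => by ring

theorem isHermitian_dTypeMap {A : Matrix ι ι ℂ} (hA : A.IsHermitian) :
    (dTypeMap d A).IsHermitian := by
  refine IsHermitian.sub (isHermitian_diagonal_of_self_adjoint _ ?_) hA
  ext j
  simp only [Pi.star_apply, star_sum, star_mul', Complex.star_def, Complex.conj_ofReal]
  exact Finset.sum_congr rfl fun i _ => congrArg _ (hA.apply i i)

theorem posSemidef_dTypeMap_vecMulVec_iff (v : ι → ℂ) :
    (dTypeMap d (vecMulVec v (star v))).PosSemidef ↔ ∀ w, Complex.normSq (star w ⬝ᵥ v) ≤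
      ∑ j, (∑ i, d i j * Complex.normSq (v i)) * Complex.normSq (w j) := by
  have hform : ∀ w, star w ⬝ᵥ dTypeMap d (vecMulVec v (star v)) *ᵥ w =
      ((∑ j, (∑ i, d i j * Complex.normSq (v i)) * Complex.normSq (w j) -
        Complex.normSq (star w ⬝ᵥ v) : ℝ) : ℂ) := fun w => by
    simp only [dotProduct_dTypeMap_mulVec, dotProduct_vecMulVec_mulVec,
      vecMulVec_self_star_apply_self]
    push_cast
    rfl
  simp only [posSemidef_iff_dotProduct_mulVec, hform, Complex.zero_le_real, sub_nonneg,
    isHermitian_dTypeMap d (posSemidef_vecMulVec_self_star v).isHermitian, true_and]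

theorem one_le_of_posSemidef_dTypeMap (i : ι)
    (h : (dTypeMap d (vecMulVec (Pi.single i 1) (star (Pi.single i 1)))).PosSemidef) :
    1 ≤ d i i := by
  simpa [Pi.single_apply, dotProduct] using
    (posSemidef_dTypeMap_vecMulVec_iff d _).mp h (Pi.single i 1)

theorem posSemidef_dTypeMap_vecMulVec (hd : ∀ i j, 0 ≤ d i j) (hdd : ∀ i, 0 < d i i)
    {v : ι → ℂ} (hv : ∑ j, Complex.normSq (v j) / ∑ i, d i j * Complex.normSq (v i) ≤ 1) :
    (dTypeMap d (vecMulVec v (star v))).PosSemidef := by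
  set s : ι → ℝ := fun j => ∑ i, d i j * Complex.normSq (v i)
  have hs : ∀ j, 0 ≤ s j := fun j =>
    Finset.sum_nonneg fun i _ => mul_nonneg (hd i j) (Complex.normSq_nonneg _)
  have hvs : ∀ j, s j = 0 → v j = 0 := fun j hj => by
    by_contra hvj
    have hdiag : d j j * Complex.normSq (v j) ≤ s j := Finset.single_le_sum
      (fun i _ => mul_nonneg (hd i j) (Complex.normSq_nonneg _)) (Finset.mem_univ j)
    have := mul_pos (hdd j) (Complex.normSq_pos.mpr hvj)
    linarith
  refine (posSemidef_dTypeMap_vecMulVec_iff d v).mpr fun w => ?_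
  calc Complex.normSq (star w ⬝ᵥ v)
      ≤ (∑ j, Complex.normSq (v j) / s j) * ∑ j, s j * Complex.normSq (w j) :=
        normSq_dotProduct_le s v w hs hvs
    _ ≤ ∑ j, s j * Complex.normSq (w j) :=
        mul_le_of_le_one_left (Finset.sum_nonneg fun j _ =>
          mul_nonneg (hs j) (Complex.normSq_nonneg _)) hv

end DTypeMap

open Matrix ComplexOrder in
/-- the `D`-type map
`A ↦ diag(∑_k a_{kk} d_{k1}, …, ∑_k a_{kk} d_{kn}) − A` is positive iff
`d_{ii} > 0` for all `i` and `∑_j |u_j|²/(∑_i d_{ij}|u_i|²) ≤ 1` for every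
vector `u` with all entries nonzero. -/
theorem stmt_12 {n : ℕ} (d : Fin n → Fin n → ℝ) (hd : ∀ i j, 0 ≤ d i j)
    (L : Matrix (Fin n) (Fin n) ℂ → Matrix (Fin n) (Fin n) ℂ)
    (hL : ∀ A, L A =
      Matrix.diagonal (fun j => ∑ i, (d i j : ℂ) * A i i) - A) :
    (∀ A : Matrix (Fin n) (Fin n) ℂ, A.PosSemidef → (L A).PosSemidef)
    ↔ ((∀ i, 0 < d i i) ∧
        ∀ u : Fin n → ℂ, (∀ i, u i ≠ 0) →
          ∑ j, Complex.normSq (u j) / (∑ i, d i j * Complex.normSq (u i)) ≤ 1) := by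
  obtain rfl : L = dTypeMap d := funext hL
  rw [forall_posSemidef_map_iff_vecMulVec]
  constructor
  · intro h
    exact ⟨fun i => one_pos.trans_le (one_le_of_posSemidef_dTypeMap d i (h _)),
      fun u _ => sum_normSq_div_le_one _ u ((posSemidef_dTypeMap_vecMulVec_iff d u).mp (h u))⟩
  · rintro ⟨hdd, H⟩ v
    have hpos : ∀ a : Fin n → ℝ, (∀ i, 0 < a i) → ∑ j, a j / ∑ i, d i j * a i ≤ 1 :=
      fun a ha => by
        simpa [Complex.normSq_ofReal, Real.mul_self_sqrt (ha _).le] using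
          H (fun i => (√(a i) : ℂ)) fun i =>
            Complex.ofReal_ne_zero.mpr (Real.sqrt_pos.mpr (ha i)).ne'
    exact posSemidef_dTypeMap_vecMulVec d hd hdd
      (sum_div_le_one_of_nonneg d hd hdd hpos fun i => Complex.normSq_nonneg _)
end

section
/- Let γ ≥ 0 and define L_γ : M_n(ℂ) → M_n(ℂ) by L_γ(A) = γ (tr A) I_n − A. For any 1 ≤ k ≤ n, the map L_γ is k-positive if and only if γ ≥ k. -/
/-!
Write `Tr₂` for the partial trace over `ℂⁿ`. The ampliation `I_k ⊗ L_γ` sends `A` to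
`γ (Tr₂ A ⊗ I) - A`.

If `k ≤ n`, the maximally entangled vector `x = ∑ᵢ eᵢ ⊗ eᵢ` gives `A = x x*` with `Tr₂ A = I`, and
`x* (γ I - x x*) x = k γ - k²`, so `k`-positivity forces `γ ≥ k`.

Conversely, it suffices to show `A ≤ k (Tr₂ A ⊗ I)` for every positive `A`, and by linearity for
`A = x x*`. Reading `x, y ∈ ℂᵏ ⊗ ℂⁿ` as `n × k` matrices `X, Y`, this is
`|tr (Y X*)|² ≤ k ‖Y X*‖²` (Frobenius norm), a product through `ℂᵏ`. A unitary change of basis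
of `ℂᵏ` makes the columns of `Y` orthogonal, and then the bound is Cauchy–Schwarz, used once
over the `k` diagonal terms and once inside each of them.
-/

open Matrix ComplexOrder Kronecker

section CauchySchwarz

variable {𝕜 ι : Type*} [RCLike 𝕜] [Fintype ι]

theorem norm_sum_mul_sq_le_s13 (u v : ι → 𝕜) :
    ‖∑ i, u i * v i‖ ^ 2 ≤ (∑ i, ‖u i‖ ^ 2) * ∑ i, ‖v i‖ ^ 2 := by
  calc ‖∑ i, u i * v i‖ ^ 2 ≤ (∑ i, ‖u i‖ * ‖v i‖) ^ 2 := by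
        gcongr
        simpa only [norm_mul] using norm_sum_le Finset.univ fun i => u i * v i
    _ ≤ _ := Finset.sum_mul_sq_le_sq_mul_sq _ _ _

theorem norm_sum_sq_le_card_mul (t : ι → 𝕜) :
    ‖∑ i, t i‖ ^ 2 ≤ Fintype.card ι * ∑ i, ‖t i‖ ^ 2 := by
  simpa using norm_sum_mul_sq_le_s13 (fun _ => (1 : 𝕜)) t

end CauchySchwarz

namespace Matrix

variable {𝕜 : Type*} [RCLike 𝕜] {κ ι : Type*}

theorem conjTranspose_mul_self_apply_self [Fintype ι] (P : Matrix ι κ 𝕜) (s : κ) :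
    (Pᴴ * P) s s = ((∑ b, ‖P b s‖ ^ 2 : ℝ) : 𝕜) := by
  simp [mul_apply, RCLike.conj_mul]

theorem mul_conjTranspose_self_apply_self [Fintype ι] (Q : Matrix κ ι 𝕜) (s : κ) :
    (Q * Qᴴ) s s = ((∑ b, ‖Q s b‖ ^ 2 : ℝ) : 𝕜) := by
  simp [mul_apply, RCLike.mul_conj]

section TraceBound

variable [Fintype κ] [Fintype ι]

theorem norm_trace_mul_sq_le_of_conjTranspose_mul_self_eq_diagonal [DecidableEq κ]
    (P : Matrix ι κ 𝕜) (Q : Matrix κ ι 𝕜) (d : κ → ℝ)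
    (hP : Pᴴ * P = diagonal fun s => (d s : 𝕜)) :
    ‖(P * Q).trace‖ ^ 2 ≤ Fintype.card κ * RCLike.re ((P * Q)ᴴ * (P * Q)).trace := by
  have hd (s : κ) : d s = ∑ b, ‖P b s‖ ^ 2 := by
    have := congrFun (congrFun hP s) s
    rw [conjTranspose_mul_self_apply_self, diagonal_apply_eq] at this
    exact_mod_cast this.symm
  have hHS : RCLike.re ((P * Q)ᴴ * (P * Q)).trace = ∑ s, d s * ∑ b, ‖Q s b‖ ^ 2 := by
    rw [conjTranspose_mul, Matrix.mul_assoc, ← Matrix.mul_assoc Pᴴ, hP, trace_mul_comm,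
      Matrix.mul_assoc]
    simp only [trace, diag, diagonal_mul, mul_conjTranspose_self_apply_self]
    norm_cast
  calc ‖(P * Q).trace‖ ^ 2 = ‖∑ s, ∑ b, Q s b * P b s‖ ^ 2 := by
        rw [trace_mul_comm]; rfl
    _ ≤ Fintype.card κ * ∑ s, ‖∑ b, Q s b * P b s‖ ^ 2 := norm_sum_sq_le_card_mul _
    _ ≤ Fintype.card κ * ∑ s, d s * ∑ b, ‖Q s b‖ ^ 2 := by
        gcongr with s
        rw [hd, mul_comm]
        exact norm_sum_mul_sq_le_s13 _ _
    _ = _ := by rw [hHS]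

theorem norm_trace_mul_sq_le_s13 (P : Matrix ι κ 𝕜) (Q : Matrix κ ι 𝕜) :
    ‖(P * Q).trace‖ ^ 2 ≤ Fintype.card κ * RCLike.re ((P * Q)ᴴ * (P * Q)).trace := by
  classical
  have hG := isHermitian_conjTranspose_mul_self P
  obtain ⟨U, hU, hdiag⟩ : ∃ U ∈ unitaryGroup κ 𝕜,
      star U * (Pᴴ * P) * U = diagonal (RCLike.ofReal ∘ hG.eigenvalues) :=
    ⟨_, hG.eigenvectorUnitary.2, by simpa using hG.conjStarAlgAut_star_eigenvectorUnitary⟩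
  have hPQ : P * U * (star U * Q) = P * Q := by
    rw [Matrix.mul_assoc, ← Matrix.mul_assoc U, Unitary.mul_star_self_of_mem hU, Matrix.one_mul]
  rw [← hPQ]
  refine norm_trace_mul_sq_le_of_conjTranspose_mul_self_eq_diagonal _ _ hG.eigenvalues ?_
  rw [conjTranspose_mul, ← star_eq_conjTranspose, Matrix.mul_assoc, ← Matrix.mul_assoc Pᴴ,
    ← Matrix.mul_assoc, hdiag]
  rfl

end TraceBound

theorem IsHermitian.posSemidef_of_re_dotProduct_mulVec_nonneg [Fintype κ] {M : Matrix κ κ 𝕜}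
    (hM : M.IsHermitian) (h : ∀ y, 0 ≤ RCLike.re (star y ⬝ᵥ M *ᵥ y)) : M.PosSemidef :=
  .of_dotProduct_mulVec_nonneg hM fun y =>
    RCLike.nonneg_iff.mpr ⟨h y, hM.im_star_dotProduct_mulVec_self y⟩

theorem star_dotProduct_vecMulVec_self_star_mulVec [Fintype κ] (x y : κ → 𝕜) :
    star y ⬝ᵥ vecMulVec x (star x) *ᵥ y = ((‖star x ⬝ᵥ y‖ ^ 2 : ℝ) : 𝕜) := by
  rw [vecMulVec_mulVec, op_smul_eq_smul, dotProduct_smul, smul_eq_mul, star_dotProduct y x,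
    RCLike.star_def, RCLike.mul_conj]
  norm_cast

def partialTraceRight {R : Type*} [AddCommMonoid R] [Fintype ι]
    (A : Matrix (κ × ι) (κ × ι) R) : Matrix κ κ R :=
  of fun i j => ∑ c, A (i, c) (j, c)

@[simp]
theorem partialTraceRight_apply {R : Type*} [AddCommMonoid R] [Fintype ι]
    (A : Matrix (κ × ι) (κ × ι) R) (i j : κ) :
    A.partialTraceRight i j = ∑ c, A (i, c) (j, c) :=
  rfl

theorem PosSemidef.partialTraceRight [Fintype κ] [Fintype ι] {A : Matrix (κ × ι) (κ × ι) 𝕜}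
    (hA : A.PosSemidef) : A.partialTraceRight.PosSemidef := by
  have : A.partialTraceRight = ∑ c : ι, A.submatrix (·, c) (·, c) := by
    ext i j
    simp [Matrix.sum_apply]
  rw [this]
  exact posSemidef_sum _ fun c _ => hA.submatrix _

theorem partialTraceRight_vecMulVec_vec [Fintype ι] (X : Matrix ι κ 𝕜) :
    (vecMulVec (vec X) (star (vec X))).partialTraceRight = (Xᴴ * X)ᵀ := by
  ext i j
  simp [vecMulVec, mul_apply, mul_comm]

section Reduction

variable [Fintype κ] [Fintype ι] [DecidableEq ι]

theorem norm_star_dotProduct_sq_le_card_mul (x y : κ × ι → 𝕜) :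
    ‖star x ⬝ᵥ y‖ ^ 2 ≤ Fintype.card κ * RCLike.re
      (star y ⬝ᵥ ((vecMulVec x (star x)).partialTraceRight ⊗ₖ (1 : Matrix ι ι 𝕜)) *ᵥ y) := by
  obtain ⟨X, rfl⟩ := vec_bijective.2 x
  obtain ⟨Y, rfl⟩ := vec_bijective.2 y
  rw [partialTraceRight_vecMulVec_vec, kronecker_mulVec_vec, transpose_transpose, Matrix.one_mul,
    star_vec_dotProduct_vec, star_vec_dotProduct_vec, trace_mul_comm]
  convert norm_trace_mul_sq_le_s13 Y Xᴴ using 4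
  rw [conjTranspose_mul, conjTranspose_conjTranspose, Matrix.mul_assoc, trace_mul_comm X]
  simp only [Matrix.mul_assoc]

theorem posSemidef_card_smul_partialTraceRight_kronecker_one_sub_vecMulVec (x : κ × ι → 𝕜) :
    ((Fintype.card κ : ℝ) • ((vecMulVec x (star x)).partialTraceRight ⊗ₖ (1 : Matrix ι ι 𝕜)) -
      vecMulVec x (star x)).PosSemidef := by
  have hx := posSemidef_vecMulVec_self_star x
  have hK := (hx.partialTraceRight.kronecker (PosSemidef.one (n := ι))).smul
    (Nat.cast_nonneg (α := ℝ) (Fintype.card κ))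
  refine (hK.isHermitian.sub hx.isHermitian).posSemidef_of_re_dotProduct_mulVec_nonneg fun y => ?_
  rw [sub_mulVec, dotProduct_sub, star_dotProduct_vecMulVec_self_star_mulVec, smul_mulVec,
    dotProduct_smul, map_sub, RCLike.ofReal_re, RCLike.smul_re, sub_nonneg]
  exact norm_star_dotProduct_sq_le_card_mul x y

theorem PosSemidef.card_smul_partialTraceRight_kronecker_one_sub
    {A : Matrix (κ × ι) (κ × ι) 𝕜} (hA : A.PosSemidef) :
    ((Fintype.card κ : ℝ) • (A.partialTraceRight ⊗ₖ (1 : Matrix ι ι 𝕜)) - A).PosSemidef := by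
  obtain ⟨m, v, rfl⟩ := posSemidef_iff_eq_sum_vecMulVec.mp hA
  have hsum : (Fintype.card κ : ℝ) •
        ((∑ i, vecMulVec (v i) (star (v i))).partialTraceRight ⊗ₖ (1 : Matrix ι ι 𝕜)) -
        ∑ i, vecMulVec (v i) (star (v i)) =
      ∑ i, ((Fintype.card κ : ℝ) •
        ((vecMulVec (v i) (star (v i))).partialTraceRight ⊗ₖ (1 : Matrix ι ι 𝕜)) -
        vecMulVec (v i) (star (v i))) := by
    ext u w
    simp [Matrix.sum_apply, Finset.sum_mul, Finset.smul_sum, Finset.sum_sub_distrib]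
    exact Finset.sum_comm
  rw [hsum]
  exact posSemidef_sum _ fun i _ =>
    posSemidef_card_smul_partialTraceRight_kronecker_one_sub_vecMulVec (v i)

theorem PosSemidef.smul_partialTraceRight_kronecker_one_sub {A : Matrix (κ × ι) (κ × ι) 𝕜}
    (hA : A.PosSemidef) {c : ℝ} (hc : Fintype.card κ ≤ c) :
    ((c : 𝕜) • (A.partialTraceRight ⊗ₖ (1 : Matrix ι ι 𝕜)) - A).PosSemidef := by
  have hK := hA.partialTraceRight.kronecker (PosSemidef.one (n := ι))
  have h := (hK.smul (sub_nonneg.mpr hc)).add hA.card_smul_partialTraceRight_kronecker_one_sub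
  rwa [← add_sub_assoc, ← add_smul, sub_add_cancel, RCLike.real_smul_eq_coe_smul (K := 𝕜)] at h

end Reduction

def maximallyEntangled [DecidableEq ι] (e : κ ↪ ι) : κ × ι → 𝕜 :=
  fun u => if u.2 = e u.1 then 1 else 0

section MaximallyEntangled

variable [Fintype ι] [DecidableEq ι]

theorem partialTraceRight_vecMulVec_maximallyEntangled [DecidableEq κ] (e : κ ↪ ι) :
    (vecMulVec (maximallyEntangled e) (star (maximallyEntangled e))).partialTraceRight =
      (1 : Matrix κ κ 𝕜) := by
  ext i j
  simp [vecMulVec, maximallyEntangled, one_apply, e.injective.eq_iff, eq_comm]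

theorem star_maximallyEntangled_dotProduct_self [Fintype κ] (e : κ ↪ ι) :
    star (maximallyEntangled e) ⬝ᵥ maximallyEntangled e = (Fintype.card κ : 𝕜) := by
  simp [dotProduct, maximallyEntangled, Fintype.sum_prod_type]

theorem card_le_of_posSemidef_smul_partialTraceRight_kronecker_one_sub [Fintype κ] [Nonempty κ]
    (e : κ ↪ ι) {c : ℝ}
    (h : ∀ A : Matrix (κ × ι) (κ × ι) 𝕜, A.PosSemidef →
      ((c : 𝕜) • (A.partialTraceRight ⊗ₖ (1 : Matrix ι ι 𝕜)) - A).PosSemidef) :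
    (Fintype.card κ : ℝ) ≤ c := by
  classical
  set x : κ × ι → 𝕜 := maximallyEntangled e
  have hx := (h _ (posSemidef_vecMulVec_self_star x)).re_dotProduct_nonneg x
  rw [partialTraceRight_vecMulVec_maximallyEntangled, one_kronecker_one, sub_mulVec, smul_mulVec,
    one_mulVec, dotProduct_sub, dotProduct_smul, star_dotProduct_vecMulVec_self_star_mulVec,
    star_maximallyEntangled_dotProduct_self] at hx
  simp only [RCLike.norm_natCast, map_sub, RCLike.ofReal_re, smul_eq_mul, RCLike.re_ofReal_mul,
    RCLike.natCast_re, sub_nonneg] at hx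
  have hk : (0 : ℝ) < Fintype.card κ := by exact_mod_cast Fintype.card_pos
  nlinarith

end MaximallyEntangled

def ampliation {R : Type*} (L : Matrix ι ι R → Matrix ι ι R) (A : Matrix (κ × ι) (κ × ι) R) :
    Matrix (κ × ι) (κ × ι) R :=
  of fun u v => L (of fun a b => A (u.1, a) (v.1, b)) u.2 v.2

theorem ampliation_smul_trace_smul_one_sub {R : Type*} [CommRing R] [Fintype ι] [DecidableEq ι]
    (c : R) (A : Matrix (κ × ι) (κ × ι) R) :
    ampliation (fun X => c • X.trace • (1 : Matrix ι ι R) - X) A =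
      c • (A.partialTraceRight ⊗ₖ (1 : Matrix ι ι R)) - A := by
  ext u v
  simp [ampliation, trace, one_apply]

end Matrix

open Matrix ComplexOrder in
theorem stmt_13_general {n k : ℕ} (hk1 : 1 ≤ k) (hkn : k ≤ n) (γ : ℝ)
    (L : Matrix (Fin n) (Fin n) ℂ → Matrix (Fin n) (Fin n) ℂ)
    (hL : ∀ A, L A = (γ : ℂ) • A.trace • (1 : Matrix (Fin n) (Fin n) ℂ) - A) :
    (∀ A : Matrix (Fin k × Fin n) (Fin k × Fin n) ℂ, A.PosSemidef →
      (Matrix.of fun u v : Fin k × Fin n =>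
        L (Matrix.of fun a b => A (u.1, a) (v.1, b)) u.2 v.2).PosSemidef)
    ↔ (k : ℝ) ≤ γ := by
  have hamp (A : Matrix (Fin k × Fin n) (Fin k × Fin n) ℂ) :
      (Matrix.of fun u v : Fin k × Fin n =>
        L (Matrix.of fun a b => A (u.1, a) (v.1, b)) u.2 v.2) =
      (γ : ℂ) • (A.partialTraceRight ⊗ₖ (1 : Matrix (Fin n) (Fin n) ℂ)) - A := by
    rw [← ampliation_smul_trace_smul_one_sub, ← funext hL]
    rfl
  simp_rw [hamp]
  have : Nonempty (Fin k) := ⟨⟨0, hk1⟩⟩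
  constructor
  · intro h
    simpa using card_le_of_posSemidef_smul_partialTraceRight_kronecker_one_sub (Fin.castLEEmb hkn) h
  · exact fun hγ A hA => hA.smul_partialTraceRight_kronecker_one_sub (by simpa using hγ)

open Matrix ComplexOrder in
/-- `L_γ(A) = γ (tr A) I − A` is `k`-positive iff `γ ≥ k`. -/
theorem stmt_13 {n k : ℕ} (hk1 : 1 ≤ k) (hkn : k ≤ n) (γ : ℝ) (hγ : 0 ≤ γ)
    (L : Matrix (Fin n) (Fin n) ℂ → Matrix (Fin n) (Fin n) ℂ)
    (hL : ∀ A, L A = (γ : ℂ) • A.trace • (1 : Matrix (Fin n) (Fin n) ℂ) - A) :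
    (∀ A : Matrix (Fin k × Fin n) (Fin k × Fin n) ℂ, A.PosSemidef →
      (Matrix.of fun u v : Fin k × Fin n =>
        L (Matrix.of fun a b => A (u.1, a) (v.1, b)) u.2 v.2).PosSemidef)
    ↔ (k : ℝ) ≤ γ :=
  stmt_13_general hk1 hkn γ L hL
end

section
/- Fix 0 ≤ t ≤ 1 and a positive integer s. For all positive reals r_1, …, r_s with r_1 r_2 ⋯ r_s = 1, one has ∑_{i=1}^s 1/(s − t + t r_i) ≤ 1, with equality when r_1 = ⋯ = r_s = 1. -/
/-!
Bernoulli's inequality `r ^ t ≤ 1 - t + t r` (for `0 ≤ t ≤ 1`) reduces the claim to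
`t = 1` with `x_i = r_i ^ t`, again of product `1`: `∑ 1 / (n - 1 + x_i) ≤ 1`, i.e.
`∑ x_i / (n - 1 + x_i) ≥ 1`. Writing `x_i = u_i ^ n`, this follows from Cauchy–Schwarz in Engel
form with numerators `u_i ^ (n - 1)`, once AM-GM on the other `n - 1` variables, whose product
is `1 / u_i`, gives `(n - 1) u_i ^ (n - 2) ≤ u_i ^ (n - 1) ∑_{j ≠ i} u_j ^ (n - 1)`.
-/

open Finset

theorem Real.rpow_le_one_sub_add_mul {r t : ℝ} (hr : 0 ≤ r) (ht0 : 0 ≤ t) (ht1 : t ≤ 1) :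
    r ^ t ≤ 1 - t + t * r := by
  have := rpow_one_add_le_one_add_mul_self (by linarith : -1 ≤ r - 1) ht0 ht1
  rw [add_sub_cancel] at this
  linarith

theorem Real.card_mul_prod_le_sum_pow {ι : Type*} (s : Finset ι) (a : ι → ℝ)
    (ha : ∀ i ∈ s, 0 ≤ a i) : (#s : ℝ) * ∏ i ∈ s, a i ≤ ∑ i ∈ s, a i ^ #s := by
  rcases s.eq_empty_or_nonempty with rfl | hs
  · simp
  have hk : (0 : ℝ) < #s := by exact_mod_cast hs.card_pos
  have hw : ∑ _i ∈ s, (#s : ℝ)⁻¹ = 1 := by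
    rw [sum_const, nsmul_eq_mul, mul_inv_cancel₀ hk.ne']
  have amgm := Real.geom_mean_le_arith_mean_weighted s (fun _ => (#s : ℝ)⁻¹)
    (fun i => a i ^ #s) (fun _ _ => by positivity) hw (fun i hi => pow_nonneg (ha i hi) _)
  rw [prod_congr rfl fun i hi => Real.pow_rpow_inv_natCast (ha i hi) hs.card_pos.ne',
    ← mul_sum] at amgm
  exact (le_inv_mul_iff₀ hk).mp amgm

section ProdEqOne

variable {ι : Type*} [Fintype ι]

theorem card_sub_one_mul_pow_le_pow_mul_sum_erase [DecidableEq ι] (u : ι → ℝ)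
    (hu : ∀ i, 0 < u i) (hprod : ∏ i, u i = 1) (hn : 2 ≤ Fintype.card ι) (i : ι) :
    ((Fintype.card ι : ℝ) - 1) * u i ^ (Fintype.card ι - 2) ≤
      u i ^ (Fintype.card ι - 1) * ∑ j ∈ univ.erase i, u j ^ (Fintype.card ι - 1) := by
  set n := Fintype.card ι
  have hcard : #(univ.erase i) = n - 1 := by rw [card_erase_of_mem (mem_univ i), card_univ]
  have amgm := Real.card_mul_prod_le_sum_pow (univ.erase i) u fun j _ => (hu j).le
  rw [hcard, Nat.cast_sub (by omega), Nat.cast_one] at amgm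
  have hpow : u i ^ (n - 1) = u i ^ (n - 2) * u i := by rw [← pow_succ]; congr 1; omega
  calc ((n : ℝ) - 1) * u i ^ (n - 2)
      = ((n : ℝ) - 1) * u i ^ (n - 2) * (u i * ∏ j ∈ univ.erase i, u j) := by
        rw [mul_prod_erase univ u (mem_univ i), hprod, mul_one]
    _ = u i ^ (n - 1) * (((n : ℝ) - 1) * ∏ j ∈ univ.erase i, u j) := by rw [hpow]; ring
    _ ≤ _ := mul_le_mul_of_nonneg_left amgm (pow_nonneg (hu i).le _)

theorem one_le_sum_pow_card_div (u : ι → ℝ) (hu : ∀ i, 0 < u i) (hprod : ∏ i, u i = 1)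
    (hn : 2 ≤ Fintype.card ι) :
    1 ≤ ∑ i, u i ^ Fintype.card ι / ((Fintype.card ι : ℝ) - 1 + u i ^ Fintype.card ι) := by
  classical
  set n := Fintype.card ι
  have : Nonempty ι := Fintype.card_pos_iff.mp (by omega)
  set y : ι → ℝ := fun i => u i ^ (n - 1)
  set d : ι → ℝ := fun i => ((n : ℝ) - 1) * u i ^ (n - 2) + y i ^ 2
  have hn1 : (1 : ℝ) ≤ n := by exact_mod_cast (by omega : 1 ≤ n)
  have hd : ∀ i, 0 < d i := fun i => by
    have := hu i; positivity
  have hysq : ∀ i, y i ^ 2 = u i ^ (n - 2) * u i ^ n := fun i => by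
    simp only [y, ← pow_mul, ← pow_add]; congr 1; omega
  have hfrac : ∀ i, y i ^ 2 / d i = u i ^ n / ((n : ℝ) - 1 + u i ^ n) := fun i => by
    have hd' : d i = u i ^ (n - 2) * ((n : ℝ) - 1 + u i ^ n) := by simp only [d, hysq]; ring
    rw [hd', hysq, mul_div_mul_left _ _ (pow_pos (hu i) _).ne']
  have hsq : (∑ i, y i) ^ 2 = ∑ i, (y i ^ 2 + y i * ∑ j ∈ univ.erase i, y j) := by
    rw [sq, sum_mul]
    refine sum_congr rfl fun i _ => ?_
    rw [← add_sum_erase _ y (mem_univ i)]; ring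
  have hsum_d : ∑ i, d i ≤ (∑ i, y i) ^ 2 := by
    rw [hsq]
    refine sum_le_sum fun i _ => ?_
    have := card_sub_one_mul_pow_le_pow_mul_sum_erase u hu hprod hn i
    simp only [d, y] at this ⊢
    linarith
  calc 1 ≤ (∑ i, y i) ^ 2 / ∑ i, d i :=
        (one_le_div (sum_pos (fun i _ => hd i) univ_nonempty)).mpr hsum_d
    _ ≤ ∑ i, y i ^ 2 / d i := sq_sum_div_le_sum_sq_div _ _ fun i _ => hd i
    _ = _ := sum_congr rfl fun i _ => hfrac i

theorem sum_one_div_card_sub_one_add_le_one (x : ι → ℝ) (hx : ∀ i, 0 < x i)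
    (hprod : ∏ i, x i = 1) : ∑ i, 1 / ((Fintype.card ι : ℝ) - 1 + x i) ≤ 1 := by
  set n := Fintype.card ι with hn_def
  rcases Nat.lt_or_ge n 2 with hn | hn
  · have : Subsingleton ι := (Fintype.card_le_one_iff_subsingleton).mp (by omega)
    rcases isEmpty_or_nonempty ι with _ | ⟨⟨a⟩⟩
    · simp
    · have hn1 : n = 1 := Fintype.card_eq_one_iff.mpr ⟨a, fun b => Subsingleton.elim b a⟩
      rw [Fintype.prod_subsingleton _ a] at hprod
      simp [Fintype.sum_subsingleton _ a, hn1, hprod]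
  have hn0 : n ≠ 0 := by omega
  have hn1 : (1 : ℝ) < n := by exact_mod_cast hn
  set u : ι → ℝ := fun i => x i ^ (n⁻¹ : ℝ)
  have hux : ∀ i, u i ^ n = x i := fun i => Real.rpow_inv_natCast_pow (hx i).le hn0
  have hT := one_le_sum_pow_card_div u (fun i => Real.rpow_pos_of_pos (hx i) _)
    (by rw [Real.finsetProd_rpow _ _ fun i _ => (hx i).le, hprod, Real.one_rpow]) hn
  rw [← hn_def] at hT
  simp only [hux] at hT
  have hsplit :
      ∀ i, ((n : ℝ) - 1) * (1 / ((n : ℝ) - 1 + x i)) + x i / ((n : ℝ) - 1 + x i) = 1 := fun i => by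
    have hpos : 0 < (n : ℝ) - 1 + x i := by linarith [hx i]
    rw [mul_one_div, ← add_div, div_self hpos.ne']
  have htotal := sum_congr rfl fun i (_ : i ∈ univ) => hsplit i
  rw [sum_add_distrib, ← mul_sum, sum_const, card_univ, nsmul_one] at htotal
  nlinarith

end ProdEqOne

/-- for `0 ≤ t ≤ 1` and positive reals `r_1,…,r_s` with
`r_1 ⋯ r_s = 1`, one has `∑ 1/(s − t + t r_i) ≤ 1`, with equality when all
`r_i = 1`. -/
theorem stmt_14 {s : ℕ} (hs : 1 ≤ s) (t : ℝ) (ht0 : 0 ≤ t) (ht1 : t ≤ 1) :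
    (∀ r : Fin s → ℝ, (∀ i, 0 < r i) → (∏ i, r i) = 1 →
      ∑ i, 1 / ((s : ℝ) - t + t * r i) ≤ 1) ∧
    (∑ _i : Fin s, 1 / ((s : ℝ) - t + t * 1)) = 1 := by
  have hs' : (1 : ℝ) ≤ s := by exact_mod_cast hs
  refine ⟨fun r hr hprod => ?_, ?_⟩
  · calc ∑ i, 1 / ((s : ℝ) - t + t * r i) ≤ ∑ i, 1 / ((s : ℝ) - 1 + r i ^ t) :=
          sum_le_sum fun i _ => one_div_le_one_div_of_le
            (by linarith [Real.rpow_pos_of_pos (hr i) t])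
            (by linarith [Real.rpow_le_one_sub_add_mul (hr i).le ht0 ht1])
      _ ≤ 1 := by
          simpa using sum_one_div_card_sub_one_add_le_one (fun i => r i ^ t)
            (fun i => Real.rpow_pos_of_pos (hr i) t)
            (by rw [Real.finsetProd_rpow _ _ fun i _ => (hr i).le, hprod, Real.one_rpow])
  · simp only [mul_one, sub_add_cancel, sum_const, card_univ, Fintype.card_fin, nsmul_eq_mul]
    field_simp
end

section
/- Let D = (d_{ij}) be an n×n nonnegative matrix whose every row sum and column sum equals n, and let Λ_D : M_n(ℂ) → M_n(ℂ) be the D-type map Λ_D(A) = diag(∑_k a_{kk} d_{k1}, …, ∑_k a_{kk} d_{kn}) − A. If d_{ii} ≥ n − 1 for all i, then Λ_D is positive. -/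
/-!
Write `a i = A i i ≥ 0`. A positive semidefinite `A` is the Gram matrix of vectors of norms
`√(a i)`, so the triangle inequality gives `x* A x ≤ (∑ i, √(a i) * |x i|) ^ 2`; hence `Λ_D(A)` is
positive semidefinite as soon as `(∑ i, √(a i) * y i) ^ 2 ≤ ∑ j, (∑ i, a i * d i j) * y j ^ 2`
for all real `y`. The right-hand side is linear in `D`, and `D - (n - 1) • 1` is doubly
stochastic, hence (Birkhoff) a convex combination of permutation matrices; so it suffices to
treat `D = (n - 1) • 1 + P`, `P` the matrix of a permutation `τ`. For positive `a`, Cauchy–Schwarz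
then reduces the inequality to `∑ i, a i / ((n - 1) * a i + a (τ i)) ≤ 1`, i.e. to
`∑ i, 1 / (n - 1 + t i) ≤ 1` whenever `∏ i, t i = 1`, which is a consequence of AM–GM; the case
`a ≥ 0` follows by continuity from `a + ε`.
-/

open Finset Matrix ComplexOrder Filter Topology

section

variable {ι : Type*} [Fintype ι]

lemma prod_lt_prod_one_sub_div_card_sub_one (hι : 2 ≤ Fintype.card ι) {u : ι → ℝ}
    (hu : ∀ i, 0 < u i) (hsum : ∑ i, u i < 1) :
    ∏ i, u i < ∏ i, (1 - u i) / (Fintype.card ι - 1) := by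
  classical
  set m : ℝ := Fintype.card ι - 1
  have hm : 0 < m := by
    have : (2 : ℝ) ≤ Fintype.card ι := by exact_mod_cast hι
    linarith
  have hu0 (i : ι) : 0 ≤ u i := (hu i).le
  have hcard_erase (i : ι) : ((univ.erase i).card : ℝ) = m := by
    rw [card_erase_of_mem (mem_univ i), card_univ, Nat.cast_sub (by omega), Nat.cast_one]
  have hgeom (i : ι) : (∏ j ∈ univ.erase i, u j) ^ m⁻¹ < (1 - u i) / m := by
    have amgm := Real.geom_mean_le_arith_mean_weighted (univ.erase i) (fun _ => m⁻¹) u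
      (fun _ _ => by positivity)
      (by rw [sum_const, nsmul_eq_mul, hcard_erase, mul_inv_cancel₀ hm.ne'])
      (fun j _ => hu0 j)
    rw [Real.finsetProd_rpow _ _ (fun j _ => hu0 j), ← mul_sum,
      sum_erase_eq_sub (mem_univ i)] at amgm
    calc _ ≤ m⁻¹ * (∑ j, u j - u i) := amgm
      _ < m⁻¹ * (1 - u i) := by gcongr
      _ = (1 - u i) / m := inv_mul_eq_div _ _
  have hprod_erase :
      ∏ i, ∏ j ∈ univ.erase i, u j = (∏ i, u i) ^ (Fintype.card ι - 1) := by
    rw [prod_comm' (t' := univ) (s' := fun j => univ.erase j) (by simp [and_comm, eq_comm])]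
    simp [prod_const, card_erase_of_mem, prod_pow]
  have hprod_nonneg : 0 ≤ ∏ i, u i := prod_nonneg fun i _ => hu0 i
  calc ∏ i, u i = ∏ i, (∏ j ∈ univ.erase i, u j) ^ m⁻¹ := by
        rw [Real.finsetProd_rpow _ _ (fun i _ => prod_nonneg fun j _ => hu0 j), hprod_erase,
          ← Real.rpow_natCast, ← Real.rpow_mul hprod_nonneg, Nat.cast_sub (by omega),
          Nat.cast_one, mul_inv_cancel₀ hm.ne', Real.rpow_one]
    _ < ∏ i, (1 - u i) / m :=
        prod_lt_prod_of_nonempty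
          (fun i _ => Real.rpow_pos_of_pos (prod_pos fun j _ => hu j) _)
          (fun i _ => hgeom i) (univ_nonempty_iff.mpr (Fintype.card_pos_iff.mp (by omega)))

lemma sum_inv_card_sub_one_add_le_one {t : ι → ℝ} (ht : ∀ i, 0 < t i) (hprod : ∏ i, t i = 1) :
    ∑ i, ((Fintype.card ι : ℝ) - 1 + t i)⁻¹ ≤ 1 := by
  rcases le_or_gt (Fintype.card ι) 1 with hι | hι
  · rcases isEmpty_or_nonempty ι with _ | ⟨⟨i⟩⟩
    · simp
    have : Subsingleton ι := Fintype.card_le_one_iff_subsingleton.mp hι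
    rw [Fintype.prod_subsingleton _ i] at hprod
    rw [Fintype.sum_subsingleton _ i, hprod,
      Fintype.card_eq_one_iff.mpr ⟨i, fun j => Subsingleton.elim j i⟩]
    norm_num
  set m : ℝ := Fintype.card ι - 1 with hm_def
  have hm : 0 < m := by
    have : (1 : ℝ) < Fintype.card ι := by exact_mod_cast hι
    linarith
  have hc (i : ι) : 0 < m + t i := by linarith [ht i]
  -- `u i := t i / (m + t i)` has `∏ u = ∏ (m + t i)⁻¹`, whereas AM–GM forces
  -- `∏ u < ∏ (m + t i)⁻¹` as soon as `∑ (m + t i)⁻¹ > 1`.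
  have hu (i : ι) : t i * (m + t i)⁻¹ = 1 - m * (m + t i)⁻¹ := by
    rw [eq_sub_iff_add_eq, ← add_mul, add_comm (t i), mul_inv_cancel₀ (hc i).ne']
  by_contra! hsum
  have hsum_u : ∑ i, t i * (m + t i)⁻¹ < 1 := by
    simp only [hu, sum_sub_distrib, ← mul_sum, sum_const, card_univ, nsmul_eq_mul, mul_one]
    nlinarith
  have hT (i : ι) : (1 - t i * (m + t i)⁻¹) / m = (m + t i)⁻¹ := by
    rw [hu, sub_sub_cancel, mul_div_cancel_left₀ _ hm.ne']
  have := prod_lt_prod_one_sub_div_card_sub_one hι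
    (fun i => mul_pos (ht i) (inv_pos.mpr (hc i))) hsum_u
  rw [← hm_def, prod_congr rfl fun i _ => hT i, prod_mul_distrib, hprod, one_mul] at this
  exact lt_irrefl _ this

lemma sq_sum_sqrt_mul_le_of_perm_of_pos (τ : Equiv.Perm ι) {a : ι → ℝ} (ha : ∀ i, 0 < a i)
    (y : ι → ℝ) :
    (∑ i, √(a i) * y i) ^ 2 ≤ ∑ i, ((Fintype.card ι - 1) * a i + a (τ i)) * y i ^ 2 := by
  have hc (i : ι) : 0 < (Fintype.card ι - 1) * a i + a (τ i) := by
    have : (1 : ℝ) ≤ Fintype.card ι := by exact_mod_cast Fintype.card_pos_iff.mpr ⟨i⟩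
    have := ha (τ i)
    have := ha i
    positivity
  have hratio : ∑ i, a i / ((Fintype.card ι - 1) * a i + a (τ i)) ≤ 1 := by
    convert sum_inv_card_sub_one_add_le_one (t := fun i => a (τ i) / a i)
      (fun i => div_pos (ha (τ i)) (ha i))
      (by rw [prod_div_distrib, Equiv.prod_comp, div_self (prod_pos fun i _ => ha i).ne'])
      using 2 with i
    field_simp [(ha i).ne']
  calc (∑ i, √(a i) * y i) ^ 2
      ≤ (∑ i, a i / ((Fintype.card ι - 1) * a i + a (τ i))) *
          ∑ i, ((Fintype.card ι - 1) * a i + a (τ i)) * y i ^ 2 := by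
        refine sum_sq_le_sum_mul_sum_of_sq_le_mul _ (fun i _ => (div_pos (ha i) (hc i)).le)
          (fun i _ => mul_nonneg (hc i).le (sq_nonneg _)) fun i _ => le_of_eq ?_
        rw [mul_pow, Real.sq_sqrt (ha i).le, div_mul_comm, mul_div_cancel_left₀ _ (hc i).ne',
          mul_comm]
    _ ≤ ∑ i, ((Fintype.card ι - 1) * a i + a (τ i)) * y i ^ 2 :=
        mul_le_of_le_one_left (sum_nonneg fun i _ => mul_nonneg (hc i).le (sq_nonneg _)) hratio

lemma sq_sum_sqrt_mul_le_of_perm (τ : Equiv.Perm ι) {a : ι → ℝ} (ha : ∀ i, 0 ≤ a i)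
    (y : ι → ℝ) :
    (∑ i, √(a i) * y i) ^ 2 ≤ ∑ i, ((Fintype.card ι - 1) * a i + a (τ i)) * y i ^ 2 := by
  have hpos : ∀ᶠ ε in 𝓝[>] (0 : ℝ), (∑ i, √(a i + ε) * y i) ^ 2 ≤
      ∑ i, ((Fintype.card ι - 1) * (a i + ε) + (a (τ i) + ε)) * y i ^ 2 :=
    eventually_nhdsWithin_of_forall fun ε (hε : 0 < ε) =>
      sq_sum_sqrt_mul_le_of_perm_of_pos τ (a := fun i => a i + ε) (fun i => by linarith [ha i]) y
  refine le_of_tendsto_of_tendsto ?_ ?_ hpos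
  · have : Continuous fun ε : ℝ => (∑ i, √(a i + ε) * y i) ^ 2 := by fun_prop
    simpa using this.continuousWithinAt.tendsto (x := 0) (s := Set.Ioi 0)
  · have : Continuous fun ε : ℝ =>
        ∑ i, ((Fintype.card ι - 1) * (a i + ε) + (a (τ i) + ε)) * y i ^ 2 := by fun_prop
    simpa using this.continuousWithinAt.tendsto (x := 0) (s := Set.Ioi 0)

lemma sub_smul_one_mem_doublyStochastic [DecidableEq ι] {d : Matrix ι ι ℝ} {r : ℝ}
    (hd : ∀ i j, i ≠ j → 0 ≤ d i j) (hdiag : ∀ i, r ≤ d i i)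
    (hrow : ∀ i, ∑ j, d i j = r + 1) (hcol : ∀ j, ∑ i, d i j = r + 1) :
    d - r • 1 ∈ doublyStochastic ℝ ι := by
  refine mem_doublyStochastic_iff_sum.mpr ⟨fun i j => ?_, fun i => ?_, fun j => ?_⟩
  · rcases eq_or_ne i j with rfl | hij
    · simpa using hdiag i
    · simpa [one_apply_ne hij] using hd i j hij
  · simp [sum_sub_distrib, one_apply, hrow]
  · simp [sum_sub_distrib, one_apply, hcol]

lemma sq_sum_sqrt_mul_le_of_sub_mem_doublyStochastic [DecidableEq ι] {d : Matrix ι ι ℝ}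
    (hd : d - ((Fintype.card ι : ℝ) - 1) • 1 ∈ doublyStochastic ℝ ι) {a : ι → ℝ}
    (ha : ∀ i, 0 ≤ a i) (y : ι → ℝ) :
    (∑ i, √(a i) * y i) ^ 2 ≤ ∑ j, (a ᵥ* d) j * y j ^ 2 := by
  obtain ⟨w, hw0, hw1, hwd⟩ := exists_eq_sum_perm_of_mem_doublyStochastic hd
  set m : ℝ := Fintype.card ι - 1
  have hvec : a ᵥ* d = ∑ σ, w σ • (m • a + a ∘ σ.symm) := by
    have hd_eq : d = ∑ σ, w σ • (m • (1 : Matrix ι ι ℝ) + σ.permMatrix ℝ) := by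
      rw [sum_congr rfl fun σ _ => smul_add (w σ) _ _, sum_add_distrib, ← sum_smul, hw1, one_smul,
        hwd, add_sub_cancel]
    simp [hd_eq, vecMul_sum, vecMul_smul, vecMul_add, vecMul_permMatrix]
  calc (∑ i, √(a i) * y i) ^ 2 = ∑ σ, w σ * (∑ i, √(a i) * y i) ^ 2 := by
        rw [← sum_mul, hw1, one_mul]
    _ ≤ ∑ σ : Equiv.Perm ι, w σ * ∑ j, (m * a j + a (σ.symm j)) * y j ^ 2 := by
        gcongr with σ
        · exact hw0 σ
        · exact sq_sum_sqrt_mul_le_of_perm σ.symm ha y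
    _ = ∑ j, (a ᵥ* d) j * y j ^ 2 := by
        simp only [hvec, Finset.sum_apply, Pi.smul_apply, Pi.add_apply, Function.comp_apply,
          smul_eq_mul, mul_sum, sum_mul]
        rw [sum_comm]
        simp only [mul_assoc]

lemma re_star_dotProduct_gram_mulVec_le {𝕜 E : Type*} [RCLike 𝕜] [SeminormedAddCommGroup E]
    [InnerProductSpace 𝕜 E] (v : ι → E) (x : ι → 𝕜) :
    RCLike.re (star x ⬝ᵥ gram 𝕜 v *ᵥ x) ≤ (∑ i, ‖v i‖ * ‖x i‖) ^ 2 := by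
  rw [star_dotProduct_gram_mulVec, inner_self_eq_norm_sq]
  gcongr
  exact (norm_sum_le _ _).trans_eq (by simp only [norm_smul, mul_comm])

lemma Matrix.PosSemidef.exists_eq_gram [DecidableEq ι] {A : Matrix ι ι ℂ} (hA : A.PosSemidef) :
    ∃ v : ι → EuclideanSpace ℂ ι, A = gram ℂ v := by
  open scoped MatrixOrder in
  obtain ⟨B, rfl⟩ := CStarAlgebra.nonneg_iff_eq_star_mul_self.mp hA.nonneg
  refine ⟨fun j => WithLp.toLp 2 (fun i => B i j), ?_⟩
  ext i j
  simp [gram_apply, mul_apply, PiLp.inner_apply, mul_comm]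

lemma Matrix.PosSemidef.re_star_dotProduct_mulVec_le {A : Matrix ι ι ℂ} (hA : A.PosSemidef)
    (x : ι → ℂ) : (star x ⬝ᵥ A *ᵥ x).re ≤ (∑ i, √(A i i).re * ‖x i‖) ^ 2 := by
  classical
  obtain ⟨v, rfl⟩ := hA.exists_eq_gram
  have hv (i : ι) : √(gram ℂ v i i).re = ‖v i‖ := (norm_eq_sqrt_re_inner (𝕜 := ℂ) (v i)).symm
  simp only [hv]
  exact re_star_dotProduct_gram_mulVec_le v x

lemma star_dotProduct_diagonal_ofReal_mulVec [DecidableEq ι] (c : ι → ℝ) (x : ι → ℂ) :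
    star x ⬝ᵥ diagonal (fun i => (c i : ℂ)) *ᵥ x = ((∑ i, c i * ‖x i‖ ^ 2 : ℝ) : ℂ) := by
  simp [dotProduct, mulVec_diagonal, mul_left_comm _ (c _ : ℂ), Complex.conj_mul']

lemma Matrix.PosSemidef.posSemidef_diagonal_sub [DecidableEq ι] {A : Matrix ι ι ℂ}
    (hA : A.PosSemidef) {c : ι → ℝ}
    (hc : ∀ y : ι → ℝ, (∑ i, √(A i i).re * y i) ^ 2 ≤ ∑ i, c i * y i ^ 2) :
    (diagonal (fun i => (c i : ℂ)) - A).PosSemidef := by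
  refine .of_dotProduct_mulVec_nonneg
    ((isHermitian_diagonal_of_self_adjoint _ ?_).sub hA.isHermitian) fun x => ?_
  · ext i
    simp
  rw [sub_mulVec, dotProduct_sub, star_dotProduct_diagonal_ofReal_mulVec, Complex.nonneg_iff,
    Complex.sub_re, Complex.sub_im, Complex.ofReal_re, Complex.ofReal_im]
  refine ⟨sub_nonneg.mpr ((hA.re_star_dotProduct_mulVec_le x).trans (hc _)), ?_⟩
  rw [← RCLike.im_to_complex, hA.isHermitian.im_star_dotProduct_mulVec_self, sub_zero]

end

open Matrix ComplexOrder in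
/-- if `D` is nonnegative with all row and column sums equal to
`n` and `d_{ii} ≥ n − 1`, then the `D`-type map `Λ_D` is positive. -/
theorem stmt_16 {n : ℕ} (d : Fin n → Fin n → ℝ) (hd : ∀ i j, 0 ≤ d i j)
    (hrow : ∀ i, ∑ j, d i j = n) (hcol : ∀ j, ∑ i, d i j = n)
    (hdiag : ∀ i, (n : ℝ) - 1 ≤ d i i)
    (L : Matrix (Fin n) (Fin n) ℂ → Matrix (Fin n) (Fin n) ℂ)
    (hL : ∀ A, L A = Matrix.diagonal (fun j => ∑ i, (d i j : ℂ) * A i i) - A) :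
    ∀ A : Matrix (Fin n) (Fin n) ℂ, A.PosSemidef → (L A).PosSemidef := by
  intro A hA
  have hds : of d - ((Fintype.card (Fin n) : ℝ) - 1) • 1 ∈ doublyStochastic ℝ (Fin n) := by
    rw [Fintype.card_fin]
    exact sub_smul_one_mem_doublyStochastic (fun i j _ => hd i j) hdiag
      (by simp [hrow]) (by simp [hcol])
  have hLA : L A = diagonal (fun j => ((∑ i, (A i i).re * d i j : ℝ) : ℂ)) - A := by
    have hre (i : Fin n) : ((A i i).re : ℂ) = A i i := hA.isHermitian.coe_re_apply_self i
    simp only [hL, Complex.ofReal_sum, Complex.ofReal_mul, hre, mul_comm]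
  rw [hLA]
  exact hA.posSemidef_diagonal_sub fun y =>
    sq_sum_sqrt_mul_le_of_sub_mem_doublyStochastic hds
      (fun i => (Complex.nonneg_iff.mp hA.diag_nonneg).1) y
end
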